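/- arXiv:2202.12489 — 6 statements merged into one kernel-verified Lean document; each statement's English description precedes it below -/
import Mathlib

section
/- Let n ≥ 2 and 1 ≤ k ≤ n−1. The family of vectors Ψ(e_{i_1}, e_{i_2}, …, e_{i_k}) ∈ T_n, indexed by strictly increasing tuples 1 ≤ i_1 < i_2 < ⋯ < i_k ≤ n−1, is a basis of the K-vector space H_k. -/
open scoped BigOperators

set_option maxHeartbeats 1000000
set_option synthInstance.maxHeartbeats 400000

noncomputable section

/-- The ground field `K = ℂ(q)`. -/
abbrev K : Type := RatFunc ℂ

/-- The variable `q` of `K = ℂ(q)`. -/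
def q : K := RatFunc.X

/-- `T n` models the `n`-th tensor power of the vector representation of
`U_q(gl(1|1))`, as functions on binary strings of length `n`. -/
abbrev T (n : ℕ) : Type := (Fin n → Fin 2) → K

/-- The standard basis vector `v_α` of `T n`. -/
def v (n : ℕ) (α : Fin n → Fin 2) : T n := fun β => if β = α then 1 else 0

/-- `v₀^{⊗ n}`, the basis vector of the all-zeroes string. -/
def v0 (n : ℕ) : T n := v n (fun _ => 0)

/-- `w n i` is the basis vector whose string has a single `1` in (1-indexed) position `i`. -/
def w (n i : ℕ) : T n := v n (fun j => if (j : ℕ) + 1 = i then 1 else 0)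

/-- `e i = -w_i + q⁻¹ w_{i+1}`. -/
def e (n i : ℕ) : T n := -(w n i) + q⁻¹ • w n (i + 1)

/-- The `R`-matrix on a pair of strands: entry `Rmat out inp`. -/
def Rmat : Fin 2 × Fin 2 → Fin 2 × Fin 2 → K := fun out inp =>
  if inp = (0, 0) then (if out = (0, 0) then q else 0)
  else if inp = (1, 0) then (if out = (0, 1) then 1 else 0)
  else if inp = (0, 1) then
    (if out = (1, 0) then 1 else if out = (0, 1) then q - q⁻¹ else 0)
  else (if out = (1, 1) then -q⁻¹ else 0)

/-- The `R`-matrix acting at positions `i`, `j` (0-indexed) of `T n`. -/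
def PhiAux (n : ℕ) (i j : Fin n) : T n →ₗ[K] T n where
  toFun f := fun β => ∑ p : Fin 2 × Fin 2,
    Rmat (β i, β j) p * f (Function.update (Function.update β i p.1) j p.2)
  map_add' f g := by
    funext β
    try dsimp only
    simp only [Pi.add_apply]
    rw [← Finset.sum_add_distrib]
    exact Finset.sum_congr rfl fun p _ => by simp [mul_add]
  map_smul' c f := by
    funext β
    try dsimp only
    simp only [Pi.smul_apply, smul_eq_mul, RingHom.id_apply]
    rw [Finset.mul_sum]
    exact Finset.sum_congr rfl fun p _ => by ring

/-- `Phi n t` is the map induced by the braid generator `σ_t` (with `1 ≤ t ≤ n-1`),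
acting through the `R`-matrix at (1-indexed) positions `(t, t+1)`. -/
def Phi (n t : ℕ) : T n →ₗ[K] T n :=
  if h : 0 < t ∧ t < n then PhiAux n ⟨t - 1, by omega⟩ ⟨t, h.2⟩ else 0

/-- The action of `E` on `T n`. -/
def En (n : ℕ) : T n →ₗ[K] T n where
  toFun f := fun β => ∑ i : Fin n,
    if β i = 0 then
      ((-1 : K) ^ (Finset.univ.filter (fun j : Fin n => j < i ∧ β j = 1)).card
        * q⁻¹ ^ (n - 1 - (i : ℕ))) * f (Function.update β i 1)
    else 0
  map_add' f g := by
    funext β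
    try dsimp only
    simp only [Pi.add_apply]
    rw [← Finset.sum_add_distrib]
    refine Finset.sum_congr rfl fun i _ => ?_
    by_cases h : β i = 0 <;> simp [h, mul_add]
  map_smul' c f := by
    funext β
    try dsimp only
    simp only [Pi.smul_apply, smul_eq_mul, RingHom.id_apply]
    rw [Finset.mul_sum]
    refine Finset.sum_congr rfl fun i _ => ?_
    by_cases h : β i = 0 <;> simp [h] <;> ring

/-- The action of `F` on `T n`. -/
def Fn (n : ℕ) : T n →ₗ[K] T n where
  toFun f := fun β => ∑ i : Fin n,
    if β i = 1 then
      ((-1 : K) ^ (Finset.univ.filter (fun j : Fin n => j < i ∧ β j = 1)).card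
        * q ^ (i : ℕ)) * f (Function.update β i 0)
    else 0
  map_add' f g := by
    funext β
    try dsimp only
    simp only [Pi.add_apply]
    rw [← Finset.sum_add_distrib]
    refine Finset.sum_congr rfl fun i _ => ?_
    by_cases h : β i = 1 <;> simp [h, mul_add]
  map_smul' c f := by
    funext β
    try dsimp only
    simp only [Pi.smul_apply, smul_eq_mul, RingHom.id_apply]
    rw [Finset.mul_sum]
    refine Finset.sum_congr rfl fun i _ => ?_
    by_cases h : β i = 1 <;> simp [h] <;> ring

/-- The number of `1`s in a binary string. -/
def wt {n : ℕ} (α : Fin n → Fin 2) : ℕ := (Finset.univ.filter (fun i => α i = 1)).card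

/-- `Tk n k` is the span of the basis vectors with exactly `k` entries equal to `1`. -/
def Tk (n k : ℕ) : Submodule K (T n) :=
  Submodule.span K {f : T n | ∃ α, wt α = k ∧ f = v n α}

/-- `Hk n k` is the space of highest weight vectors of weight `(n-k)ε₁ + kε₂`. -/
def Hk (n k : ℕ) : Submodule K (T n) := LinearMap.ker (En n) ⊓ Tk n k

/-- The bilinear product `m` on `T n`. -/
def mul2 (n : ℕ) (f g : T n) : T n := fun γ =>
  ∑ α : Fin n → Fin 2,
    if (∀ i, α i = 1 → γ i = 1) then
      ((-1 : K) ^ (∑ p ∈ Finset.univ.filter (fun p : Fin n × Fin n => p.1 < p.2),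
          (((fun i => if α i = 1 then 0 else γ i) p.1 : Fin 2) : ℕ) * ((α p.2 : Fin 2) : ℕ)))
        * f α * g (fun i => if α i = 1 then 0 else γ i)
    else 0

/-- The left-iterated product `Ψ(u_1, …, u_k) = m(…m(m(u_1,u_2),u_3)…,u_k)`. -/
def Psi (n : ℕ) : (k : ℕ) → (Fin k → T n) → T n
  | 0, _ => v0 n
  | 1, u => u 0
  | (k + 2), u => mul2 n (Psi n (k + 1) (fun i => u i.castSucc)) (u (Fin.last (k + 1)))

/-- Concatenation (tensor product) `T a ⊗ T b → T (a + b)`. -/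
def conc {a b : ℕ} (f : T a) (g : T b) : T (a + b) := fun γ =>
  f (fun i => γ (Fin.castAdd b i)) * g (fun i => γ (Fin.natAdd a i))

/-- Identification `T a ≃ T b` for `a = b`. -/
def castT {a b : ℕ} (h : a = b) (f : T a) : T b := fun γ => f (fun i => γ (Fin.cast h i))

/-- The block vector `Θ_b = Σ_{r=0}^{b-1} (-1)^r q^{-(b-1-r)} v_{β(r)}`. -/
def Theta (b : ℕ) : T b :=
  ∑ r : Fin b, ((-1 : K) ^ (r : ℕ) * q⁻¹ ^ (b - 1 - (r : ℕ))) •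
    v b (fun i => if i = r then 0 else 1)

/-- The map induced by the braid `λ = σ_{n-1} ⋯ σ_1`. -/
def Lam (n : ℕ) : T n →ₗ[K] T n :=
  ((List.range (n - 1)).map (fun t => Phi n (t + 1))).foldl (fun acc g => g ∘ₗ acc) LinearMap.id

/-- The Vandermonde-type matrix `B(n)`. -/
def B (n : ℕ) : Matrix (Fin n) (Fin n) K :=
  fun i j => q ^ ((i : ℤ) * (n : ℤ) * ((n : ℤ) - 1 - 2 * (j : ℤ)))

/-- `C(n) = B(n)⁻¹`. -/
def Cmat (n : ℕ) : Matrix (Fin n) (Fin n) K := (B n)⁻¹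

/-- A combinatorial string `(a_1, b_1, a_2, b_2, …, b_l, a_{l+1})`. -/
structure GString where
  l : ℕ
  a : Fin (l + 1) → ℕ
  b : Fin l → ℕ

/-- Membership of a string in `S_k` (for strands number `n`). -/
def memSk (n k : ℕ) (s : GString) : Prop :=
  (∀ i, 2 ≤ s.b i) ∧ (∑ i, (s.b i - 1)) = k ∧ ((∑ i, s.a i) + ∑ i, s.b i) = n

/-- The length of the string, computed blockwise. -/
def lenOf : (l : ℕ) → (Fin (l + 1) → ℕ) → (Fin l → ℕ) → ℕ
  | 0, a, _ => a 0
  | (l + 1), a, b => (a 0 + b 0) + lenOf l (fun i => a i.succ) (fun i => b i.succ)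

/-- The concatenation `v₀^{⊗a_1} ⊗ Θ_{b_1} ⊗ ⋯ ⊗ Θ_{b_l} ⊗ v₀^{⊗a_{l+1}}`. -/
def rawphi : (l : ℕ) → (a : Fin (l + 1) → ℕ) → (b : Fin l → ℕ) → T (lenOf l a b)
  | 0, a, _ => v0 (a 0)
  | (l + 1), a, b =>
      conc (conc (v0 (a 0)) (Theta (b 0)))
        (rawphi l (fun i => a i.succ) (fun i => b i.succ))

/-- `φ(s) ∈ T n`, the vector associated to a string `s`. -/
def phi (n : ℕ) (s : GString) : T n :=
  if h : lenOf s.l s.a s.b = n then castT h (rawphi s.l s.a s.b) else 0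

/-!
`T n` is the exterior algebra on the basis `w_1, …, w_n`: `m` is the wedge product of the
`v_α` (with the Koszul sign `(-1) ^ inversions`), and `E` is the contraction with the covector
`ξ(w_i) = q^{-(n-i)}`, hence a super-derivation of `m`. Since `ξ(e_i) = 0`, every
`Ψ(e_{i_1}, …, e_{i_k})` lies in `H_k`.

These vectors are triangular: `Ψ(e_s)` is supported on strings of weight `k` whose positions sum to
at most `∑ s_j`, with equality only at the string `ofRange n s`, where it is nonzero; hence they are
linearly independent. Conversely, an element of `ker E` is determined by its values on the strings
starting with `0`, and the weight-`k` strings of this form are exactly the `ofRange n s`, so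
`dim H_k` is at most the number of indices `s`.
-/

namespace UqGl11

open Finset Function

open scoped Classical

variable {n : ℕ}

/-! A string `γ : Fin n → Fin 2` is the set of positions where it is `1`; the pointwise order,
`⊔`, `\` and `Disjoint` of `Fin 2 = {0 < 1}` are containment, union, difference and
disjointness of these sets. -/

def ones (γ : Fin n → Fin 2) : Finset (Fin n) := {i | γ i = 1}

def onesBefore (γ : Fin n → Fin 2) (i : Fin n) : ℕ := #{j | j < i ∧ γ j = 1}

def onesAfter (γ : Fin n → Fin 2) (i : Fin n) : ℕ := #{j | i < j ∧ γ j = 1}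

def posSum (γ : Fin n → Fin 2) : ℕ := ∑ i ∈ ones γ, (i : ℕ)

def inversions (α β : Fin n → Fin 2) : ℕ := ∑ i ∈ ones α, onesBefore β i

lemma fin2_eq_zero_or_one (a : Fin 2) : a = 0 ∨ a = 1 := by
  revert a; decide

@[simp] lemma mem_ones {γ : Fin n → Fin 2} {i : Fin n} : i ∈ ones γ ↔ γ i = 1 := by
  simp [ones]

lemma wt_eq_card_ones (γ : Fin n → Fin 2) : wt γ = #(ones γ) := rfl

lemma le_iff_forall {α γ : Fin n → Fin 2} : α ≤ γ ↔ ∀ i, α i = 1 → γ i = 1 := by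
  refine Pi.le_def.trans (forall_congr' fun i => ?_)
  generalize α i = a, γ i = c
  revert a c; decide

lemma disjoint_iff_forall {α β : Fin n → Fin 2} : Disjoint α β ↔ ∀ i, α i = 1 → β i = 0 := by
  refine Pi.disjoint_iff.trans (forall_congr' fun i => ?_)
  rw [disjoint_iff]
  generalize α i = a, β i = b
  revert a b; decide

lemma ones_sup (α β : Fin n → Fin 2) : ones (α ⊔ β) = ones α ∪ ones β := by
  ext i
  simp only [mem_ones, mem_union, Pi.sup_apply]
  generalize α i = a, β i = b
  revert a b; decide

lemma disjoint_ones {α β : Fin n → Fin 2} (h : Disjoint α β) : Disjoint (ones α) (ones β) :=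
  Finset.disjoint_left.2 fun i hα hβ => by
    rw [mem_ones] at hα hβ
    simp [disjoint_iff_forall.1 h i hα] at hβ

lemma ones_update_zero (γ : Fin n → Fin 2) (i : Fin n) :
    ones (update γ i 0) = (ones γ).erase i := by
  ext j
  rcases eq_or_ne j i with rfl | hj <;> simp [update_of_ne, *]

lemma ones_single (p : Fin n) : ones (Pi.single p 1 : Fin n → Fin 2) = {p} := by
  ext j
  rcases eq_or_ne j p with rfl | hj <;> simp [*]

@[simp] lemma single_le_iff {p : Fin n} {γ : Fin n → Fin 2} :
    (Pi.single p 1 : Fin n → Fin 2) ≤ γ ↔ γ p = 1 := by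
  rw [le_iff_forall]
  refine ⟨fun h => h p (by simp), fun h j hj => ?_⟩
  rcases eq_or_ne j p with rfl | hjp
  · exact h
  · simp [hjp] at hj

lemma sdiff_single (γ : Fin n → Fin 2) (p : Fin n) :
    γ \ (Pi.single p 1 : Fin n → Fin 2) = update γ p 0 := by
  ext1 j
  rcases eq_or_ne j p with rfl | hj
  · simp only [Pi.sdiff_apply, Pi.single_eq_same, update_self]
    generalize γ j = c; revert c; decide
  · simp only [Pi.sdiff_apply, ne_eq, hj, not_false_eq_true, Pi.single_eq_of_ne, update_of_ne]
    generalize γ j = c; revert c; decide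

lemma onesBefore_update_self (γ : Fin n → Fin 2) (i : Fin n) (a : Fin 2) :
    onesBefore (update γ i a) i = onesBefore γ i := by
  unfold onesBefore
  congr 1
  refine filter_congr fun j _ => ?_
  rw [and_congr_right_iff]
  intro hj
  rw [update_of_ne hj.ne]

lemma onesBefore_sup {α β : Fin n → Fin 2} (h : Disjoint α β) (i : Fin n) :
    onesBefore (α ⊔ β) i = onesBefore α i + onesBefore β i := by
  unfold onesBefore
  rw [← card_union_of_disjoint]
  · congr 1
    ext j
    simp only [mem_filter, mem_univ, true_and, mem_union, Pi.sup_apply, ← and_or_left,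
      and_congr_right_iff]
    intro _
    generalize α j = a, β j = b
    revert a b; decide
  · rw [Finset.disjoint_filter]
    intro j _ hα hβ
    simp [disjoint_iff_forall.1 h j hα.2] at hβ

lemma onesBefore_eq_update_add {β : Fin n → Fin 2} {i : Fin n} (hβ : β i = 1) (j : Fin n) :
    onesBefore β j = onesBefore (update β i 0) j + if i < j then 1 else 0 := by
  unfold onesBefore
  split_ifs with hij
  · rw [← card_insert_of_notMem (s := {l | l < j ∧ update β i 0 l = 1}) (a := i) (by simp)]
    congr 1
    ext l
    rcases eq_or_ne l i with rfl | hl <;> simp [update_of_ne, *]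
  · rw [add_zero]
    congr 1
    refine filter_congr fun l _ => ?_
    rw [and_congr_right_iff]
    intro hl
    rw [update_of_ne (by rintro rfl; exact hij hl)]

lemma wt_eq_onesBefore_add_onesAfter (γ : Fin n → Fin 2) (i : Fin n) :
    wt γ = onesBefore γ i + (γ i : ℕ) + onesAfter γ i := by
  have hi : (γ i : ℕ) = ∑ j, if i = j then (γ j : ℕ) else 0 := by simp
  rw [hi, wt, onesBefore, onesAfter, card_filter, card_filter, card_filter,
    ← sum_add_distrib, ← sum_add_distrib]
  refine sum_congr rfl fun j _ => ?_
  rcases lt_trichotomy j i with h | rfl | h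
  · simp [h, h.ne', h.not_gt]
  · rcases fin2_eq_zero_or_one (γ j) with hj | hj <;> simp [hj]
  · simp [h, h.ne, h.not_gt]

lemma inversions_eq_update_left {α : Fin n → Fin 2} {i : Fin n} (hα : α i = 1)
    (β : Fin n → Fin 2) :
    inversions α β = inversions (update α i 0) β + onesBefore β i := by
  rw [inversions, inversions, ones_update_zero, ← add_sum_erase _ _ (mem_ones.2 hα), add_comm]

lemma inversions_eq_update_right (α : Fin n → Fin 2) {β : Fin n → Fin 2} {i : Fin n}
    (hβ : β i = 1) :
    inversions α β = inversions α (update β i 0) + onesAfter α i := by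
  rw [inversions, inversions, sum_congr rfl fun j _ => onesBefore_eq_update_add hβ j,
    sum_add_distrib, sum_boole, onesAfter, ones, filter_filter]
  simp only [Nat.cast_id, and_comm]

lemma sdiff_sdiff_right_self (γ β : Fin n → Fin 2) : γ \ (γ \ β) = γ ⊓ β := by
  ext1 i
  simp only [Pi.sdiff_apply, Pi.inf_apply]
  generalize γ i = c, β i = b
  revert b c; decide

lemma le_and_sdiff_eq_iff {α β γ : Fin n → Fin 2} :
    β ≤ γ ∧ γ \ β = α ↔ Disjoint α β ∧ γ = α ⊔ β := by
  simp only [le_iff_forall, disjoint_iff_forall, funext_iff, ← forall_and, Pi.sdiff_apply,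
    Pi.sup_apply]
  refine forall_congr' fun i => ?_
  generalize α i = a, β i = b, γ i = c
  revert a b c; decide

lemma update_zero_le (γ : Fin n → Fin 2) (i : Fin n) : update γ i 0 ≤ γ :=
  update_le_iff.2 ⟨Fin.zero_le _, fun _ _ => le_rfl⟩

lemma eq_sum_smul_v (f : T n) : f = ∑ γ, f γ • v n γ := by
  ext β
  simp [v]

lemma basisFun_eq_v (α : Fin n → Fin 2) : Pi.basisFun K (Fin n → Fin 2) α = v n α := by
  ext β
  simp [v, Pi.single_apply]

lemma sum_pairs_eq_inversions (α β : Fin n → Fin 2) :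
    ∑ p ∈ univ.filter (fun p : Fin n × Fin n => p.1 < p.2), (β p.1 : ℕ) * (α p.2 : ℕ) =
      inversions α β := by
  rw [sum_filter, ← univ_product_univ, sum_product, sum_comm, inversions, ones, sum_filter]
  refine sum_congr rfl fun i _ => ?_
  rw [onesBefore, card_filter]
  rcases fin2_eq_zero_or_one (α i) with h | h
  · simp [h]
  · simp only [h, if_true]
    refine sum_congr rfl fun j _ => ?_
    rcases fin2_eq_zero_or_one (β j) with hj | hj <;> by_cases hji : j < i <;> simp [hj, hji]

lemma mul2_apply (f g : T n) (γ : Fin n → Fin 2) :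
    mul2 n f g γ = ∑ α, if α ≤ γ then (-1) ^ inversions α (γ \ α) * f α * g (γ \ α) else 0 := by
  have hsdiff : ∀ (α : Fin n → Fin 2) i, (if α i = 1 then 0 else γ i) = (γ \ α) i := by
    intro α i
    rw [Pi.sdiff_apply]
    generalize α i = a, γ i = c
    revert a c; decide
  simp only [mul2, hsdiff, le_iff_forall, sum_pairs_eq_inversions]

lemma mul2_v_apply (f : T n) (β γ : Fin n → Fin 2) :
    mul2 n f (v n β) γ = if β ≤ γ then (-1) ^ inversions (γ \ β) β * f (γ \ β) else 0 := by
  rw [mul2_apply, sum_eq_single (γ \ β)]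
  · rw [if_pos sdiff_le, sdiff_sdiff_right_self]
    by_cases h : β ≤ γ
    · simp [h, v]
    · simp [h, inf_eq_right, v]
  · intro α _ hα
    split_ifs with hαγ
    · have : γ \ α ≠ β := by
        rintro rfl
        exact hα (by rw [sdiff_sdiff_right_self, inf_eq_right.2 hαγ])
      simp [v, this]
    · rfl
  · simp

lemma mul2_v_v (α β : Fin n → Fin 2) :
    mul2 n (v n α) (v n β) =
      if Disjoint α β then (-1 : K) ^ inversions α β • v n (α ⊔ β) else 0 := by
  ext γ
  rw [mul2_v_apply]
  by_cases h : Disjoint α β ∧ γ = α ⊔ β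
  · obtain ⟨hle, hsd⟩ := le_and_sdiff_eq_iff.2 h
    rw [if_pos hle, hsd, if_pos h.1]
    simp [v, h.2]
  · have hL : ∀ _ : β ≤ γ, γ \ β ≠ α := fun hle heq => h (le_and_sdiff_eq_iff.1 ⟨hle, heq⟩)
    have hR : ∀ _ : Disjoint α β, γ ≠ α ⊔ β := fun hdis heq => h ⟨hdis, heq⟩
    split_ifs with hle hdis hdis
    · simp [v, hL hle, hR hdis]
    · simp [v, hL hle]
    · simp [v, hR hdis]
    · rfl

def mulₗ (n : ℕ) : T n →ₗ[K] T n →ₗ[K] T n :=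
  LinearMap.mk₂ K (mul2 n)
    (fun f₁ f₂ g => by
      ext γ
      simp only [mul2, Pi.add_apply, ← sum_add_distrib]
      exact sum_congr rfl fun α _ => by split_ifs <;> ring)
    (fun c f g => by
      ext γ
      simp only [mul2, Pi.smul_apply, smul_eq_mul, mul_sum]
      exact sum_congr rfl fun α _ => by split_ifs <;> ring)
    (fun f g₁ g₂ => by
      ext γ
      simp only [mul2, Pi.add_apply, ← sum_add_distrib]
      exact sum_congr rfl fun α _ => by split_ifs <;> ring)
    (fun c f g => by
      ext γ
      simp only [mul2, Pi.smul_apply, smul_eq_mul, mul_sum]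
      exact sum_congr rfl fun α _ => by split_ifs <;> ring)

lemma mulₗ_apply (f g : T n) : mulₗ n f g = mul2 n f g := rfl

lemma v0_eq : v0 n = v n ⊥ := rfl

lemma mul2_v0_left (g : T n) : mul2 n (v0 n) g = g := by
  have hbasis : ∀ β, mul2 n (v0 n) (v n β) = v n β := fun β => by
    have h0 : inversions ⊥ β = 0 := by simp [inversions, ones, bot_eq_zero]
    rw [v0_eq, mul2_v_v, if_pos disjoint_bot_left, h0, pow_zero, one_smul, bot_sup_eq]
  conv_rhs => rw [eq_sum_smul_v g]
  conv_lhs => rw [eq_sum_smul_v g, ← mulₗ_apply, map_sum]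
  simp only [map_smul, mulₗ_apply, hbasis]

lemma Psi_succ (k : ℕ) (u : Fin (k + 1) → T n) :
    Psi n (k + 1) u = mul2 n (Psi n k fun i => u i.castSucc) (u (Fin.last k)) := by
  cases k with
  | zero => exact (mul2_v0_left _).symm
  | succ k => rfl

def enCoeff (γ : Fin n → Fin 2) (i : Fin n) : K := (-1) ^ onesBefore γ i * q⁻¹ ^ (n - 1 - (i : ℕ))

lemma En_v (α : Fin n → Fin 2) :
    En n (v n α) = ∑ i ∈ ones α, enCoeff α i • v n (update α i 0) := by
  ext β
  simp only [En, LinearMap.coe_mk, AddHom.coe_mk, Finset.sum_apply, Pi.smul_apply, smul_eq_mul,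
    ones, sum_filter]
  refine sum_congr rfl fun i _ => ?_
  by_cases h : α i = 1 ∧ β = update α i 0
  · obtain ⟨hα, rfl⟩ := h
    have h := onesBefore_update_self α i 0
    simp only [onesBefore] at h
    simp [hα, v, enCoeff, onesBefore, h]
  · have hL : ¬ (β i = 0 ∧ update β i 1 = α) := by
      rintro ⟨hβ, rfl⟩
      exact h ⟨by simp, by simp [hβ]⟩
    have hR : α i = 1 → β ≠ update α i 0 := fun hα hβ => h ⟨hα, hβ⟩
    by_cases hβ : β i = 0 <;> by_cases hα : α i = 1 <;>
      simp_all [v]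

def parity (n : ℕ) : T n →ₗ[K] T n where
  toFun f γ := (-1) ^ wt γ * f γ
  map_add' f g := by ext γ; simp [mul_add]
  map_smul' c f := by ext γ; simp only [Pi.smul_apply, smul_eq_mul, RingHom.id_apply]; ring

lemma parity_v (α : Fin n → Fin 2) : parity n (v n α) = (-1 : K) ^ wt α • v n α := by
  ext γ
  by_cases h : γ = α <;> simp [parity, v, h]

lemma neg_one_pow_eq_of_mod_two {a b : ℕ} (h : a % 2 = b % 2) : (-1 : K) ^ a = (-1) ^ b :=
  neg_one_pow_congr (by rw [Nat.even_iff, Nat.even_iff, h])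

lemma not_disjoint_of_eq_one {α β : Fin n → Fin 2} {p : Fin n} (hα : α p = 1) (hβ : β p = 1) :
    ¬ Disjoint α β := by
  rw [disjoint_iff_forall]
  intro h
  simp [h p hα] at hβ

lemma update_sup_of_eq_zero {α β : Fin n → Fin 2} {i : Fin n} (hβ : β i = 0) :
    update α i 0 ⊔ β = update (α ⊔ β) i 0 := by
  ext1 j
  rcases eq_or_ne j i with rfl | hj
  · simp [hβ]
  · simp [hj]

lemma enCoeff_smul_mul2_update_left {α β : Fin n → Fin 2} (hαβ : Disjoint α β) {i : Fin n}
    (hα : α i = 1) :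
    enCoeff α i • mul2 n (v n (update α i 0)) (v n β) =
      (-1 : K) ^ inversions α β • enCoeff (α ⊔ β) i • v n (update (α ⊔ β) i 0) := by
  have hβ : β i = 0 := disjoint_iff_forall.1 hαβ i hα
  rw [mul2_v_v, if_pos (hαβ.mono_left (update_zero_le α i)), update_sup_of_eq_zero hβ, smul_smul,
    smul_smul]
  congr 1
  have h : (-1 : K) ^ (onesBefore α i + inversions (update α i 0) β) =
      (-1) ^ (inversions α β + (onesBefore α i + onesBefore β i)) :=
    neg_one_pow_eq_of_mod_two (by rw [inversions_eq_update_left hα β]; omega)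
  rw [enCoeff, enCoeff, onesBefore_sup hαβ]
  linear_combination q⁻¹ ^ (n - 1 - (i : ℕ)) * h

lemma enCoeff_smul_parity_smul_mul2_update_right {α β : Fin n → Fin 2} (hαβ : Disjoint α β)
    {i : Fin n} (hβ : β i = 1) :
    enCoeff β i • (-1 : K) ^ wt α • mul2 n (v n α) (v n (update β i 0)) =
      (-1 : K) ^ inversions α β • enCoeff (α ⊔ β) i • v n (update (α ⊔ β) i 0) := by
  have hα : α i = 0 := disjoint_iff_forall.1 hαβ.symm i hβ
  have hsup : α ⊔ update β i 0 = update (α ⊔ β) i 0 := by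
    rw [sup_comm, update_sup_of_eq_zero hα, sup_comm]
  rw [mul2_v_v, if_pos (hαβ.mono_right (update_zero_le β i)), hsup, smul_smul, smul_smul,
    smul_smul]
  congr 1
  have h : (-1 : K) ^ (onesBefore β i + wt α + inversions α (update β i 0)) =
      (-1) ^ (inversions α β + (onesBefore α i + onesBefore β i)) := by
    rw [inversions_eq_update_right α hβ, wt_eq_onesBefore_add_onesAfter α i, hα]
    exact neg_one_pow_eq_of_mod_two (by simp only [Fin.val_zero]; omega)
  rw [enCoeff, enCoeff, onesBefore_sup hαβ]
  linear_combination q⁻¹ ^ (n - 1 - (i : ℕ)) * h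

lemma enCoeff_smul_mul2_update_add_eq_zero {α β : Fin n → Fin 2} {p : Fin n} (hα : α p = 1)
    (hβ : β p = 1) :
    enCoeff α p • mul2 n (v n (update α p 0)) (v n β) +
      enCoeff β p • (-1 : K) ^ wt α • mul2 n (v n α) (v n (update β p 0)) = 0 := by
  have hdis : Disjoint (update α p 0) β ↔ Disjoint α (update β p 0) := by
    simp only [disjoint_iff_forall]
    refine forall_congr' fun j => ?_
    rcases eq_or_ne j p with rfl | hj
    · simp [hα]
    · simp [hj]
  have hsup : update α p 0 ⊔ β = α ⊔ update β p 0 := by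
    ext1 j
    rcases eq_or_ne j p with rfl | hj
    · simp [hα, hβ]
    · simp [hj]
  rw [mul2_v_v, mul2_v_v]
  by_cases hd : Disjoint (update α p 0) β
  · rw [if_pos hd, if_pos (hdis.1 hd), hsup, smul_smul, smul_smul, smul_smul, ← add_smul]
    have h : (-1 : K) ^ (onesBefore β p + wt α + inversions α (update β p 0)) =
        (-1) ^ (onesBefore α p + inversions (update α p 0) β + 1) := by
      rw [wt_eq_onesBefore_add_onesAfter α p, hα]
      refine neg_one_pow_eq_of_mod_two ?_
      have h1 := inversions_eq_update_left hα β
      have h2 := inversions_eq_update_right α hβ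
      simp only [Fin.val_one]
      omega
    rw [enCoeff, enCoeff]
    convert zero_smul K _
    linear_combination q⁻¹ ^ (n - 1 - (p : ℕ)) * h
  · rw [if_neg hd, if_neg (mt hdis.2 hd), smul_zero, smul_zero, smul_zero, add_zero]

lemma En_mul2_v_v (α β : Fin n → Fin 2) :
    En n (mul2 n (v n α) (v n β)) =
      mul2 n (En n (v n α)) (v n β) + mul2 n (parity n (v n α)) (En n (v n β)) := by
  simp only [En_v, parity_v, ← mulₗ_apply, map_sum, map_smul, LinearMap.sum_apply,
    LinearMap.smul_apply]
  simp only [mulₗ_apply]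
  by_cases hαβ : Disjoint α β
  · rw [mul2_v_v, if_pos hαβ, map_smul, En_v, ones_sup, sum_union (disjoint_ones hαβ), smul_add,
      smul_sum, smul_sum]
    congr 1
    · exact sum_congr rfl fun i hi => (enCoeff_smul_mul2_update_left hαβ (mem_ones.1 hi)).symm
    · exact sum_congr rfl fun i hi =>
        (enCoeff_smul_parity_smul_mul2_update_right hαβ (mem_ones.1 hi)).symm
  · obtain ⟨p, hαp, hβp⟩ : ∃ p, α p = 1 ∧ β p = 1 := by
      simp only [disjoint_iff_forall, not_forall] at hαβ
      obtain ⟨p, hαp, hβp⟩ := hαβ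
      exact ⟨p, hαp, (fin2_eq_zero_or_one _).resolve_left hβp⟩
    rw [mul2_v_v, if_neg hαβ, map_zero, sum_eq_single_of_mem p (mem_ones.2 hαp),
      sum_eq_single_of_mem p (mem_ones.2 hβp), enCoeff_smul_mul2_update_add_eq_zero hαp hβp]
    · intro i _ hip
      rw [mul2_v_v, if_neg (not_disjoint_of_eq_one hαp (by rwa [update_of_ne hip.symm])),
        smul_zero, smul_zero]
    · intro i _ hip
      rw [mul2_v_v, if_neg (not_disjoint_of_eq_one (by rwa [update_of_ne hip.symm]) hβp),
        smul_zero]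

lemma En_mul2 (f g : T n) :
    En n (mul2 n f g) = mul2 n (En n f) g + mul2 n (parity n f) (En n g) := by
  have key : (mulₗ n).compr₂ (En n) =
      (mulₗ n).comp (En n) + ((mulₗ n).comp (parity n)).compl₂ (En n) := by
    refine (Pi.basisFun K _).ext fun α => (Pi.basisFun K _).ext fun β => ?_
    simpa only [LinearMap.compr₂_apply, LinearMap.comp_apply, LinearMap.add_apply,
      LinearMap.compl₂_apply, basisFun_eq_v, mulₗ_apply] using En_mul2_v_v α β
  simpa only [LinearMap.compr₂_apply, LinearMap.comp_apply, LinearMap.add_apply,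
    LinearMap.compl₂_apply, mulₗ_apply] using LinearMap.congr_fun₂ key f g

lemma q_ne_zero : q ≠ 0 := RatFunc.X_ne_zero

lemma w_eq (i : ℕ) (hi : i < n) :
    w n (i + 1) = v n (Pi.single ⟨i, hi⟩ 1) := by
  rw [w]
  congr 1
  ext1 j
  simp [Pi.single_apply, Fin.ext_iff]

lemma e_eq {i : ℕ} (hi : 1 ≤ i) (hin : i < n) :
    e n i = -v n (Pi.single ⟨i - 1, by omega⟩ 1) + q⁻¹ • v n (Pi.single ⟨i, hin⟩ 1) := by
  obtain ⟨j, rfl⟩ : ∃ j, i = j + 1 := ⟨i - 1, by omega⟩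
  rw [e, w_eq j (by omega), w_eq (j + 1) hin]
  rfl

lemma En_v_single (p : Fin n) :
    En n (v n (Pi.single p 1)) = q⁻¹ ^ (n - 1 - (p : ℕ)) • v0 n := by
  have hupd : update (Pi.single p 1 : Fin n → Fin 2) p 0 = ⊥ := by
    rw [← sdiff_single, sdiff_self]
  have hbefore : onesBefore (Pi.single p 1 : Fin n → Fin 2) p = 0 := by
    rw [← onesBefore_update_self _ p 0, hupd]
    simp [onesBefore, bot_eq_zero]
  rw [En_v, ones_single, sum_singleton, hupd, enCoeff, hbefore, pow_zero, one_mul]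
  rfl

lemma En_e {i : ℕ} (hi : 1 ≤ i) (hin : i < n) : En n (e n i) = 0 := by
  rw [e_eq hi hin, map_add, map_neg, map_smul, En_v_single, En_v_single, smul_smul, ← pow_succ',
    show n - 1 - (i - 1) = n - 1 - i + 1 by omega, neg_add_cancel]

variable {k : ℕ}

lemma En_Psi_e (s : Fin k → ℕ) (hs : ∀ j, 1 ≤ s j ∧ s j < n) :
    En n (Psi n k fun j => e n (s j)) = 0 := by
  induction k with
  | zero =>
    rw [Psi, v0_eq, En_v]
    simp [ones, bot_eq_zero]
  | succ k ih =>
    rw [Psi_succ, En_mul2, ih _ fun j => hs _, En_e (hs _).1 (hs _).2, ← mulₗ_apply,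
      ← mulₗ_apply, map_zero, map_zero, LinearMap.zero_apply, add_zero]

lemma wt_update_zero_add_one {γ : Fin n → Fin 2} {p : Fin n} (h : γ p = 1) :
    wt (update γ p 0) + 1 = wt γ := by
  rw [wt_eq_card_ones, wt_eq_card_ones, ones_update_zero, card_erase_add_one (mem_ones.2 h)]

lemma posSum_update_zero_add {γ : Fin n → Fin 2} {p : Fin n} (h : γ p = 1) :
    posSum (update γ p 0) + p = posSum γ := by
  rw [posSum, posSum, ones_update_zero, sum_erase_add _ _ (mem_ones.2 h)]

lemma mul2_v_single_apply (f : T n) (p : Fin n) (γ : Fin n → Fin 2) :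
    mul2 n f (v n (Pi.single p 1)) γ =
      if γ p = 1 then (-1) ^ inversions (update γ p 0) (Pi.single p 1) * f (update γ p 0)
      else 0 := by
  simp only [mul2_v_apply, single_le_iff, sdiff_single]

lemma exists_of_mul2_e_apply_ne_zero {f : T n} {i : ℕ} (hi : 1 ≤ i) (hin : i < n)
    {γ : Fin n → Fin 2} (h : mul2 n f (e n i) γ ≠ 0) :
    ∃ p : Fin n, i ≤ (p : ℕ) + 1 ∧ (p : ℕ) ≤ i ∧ γ p = 1 ∧ f (update γ p 0) ≠ 0 := by
  rw [e_eq hi hin, ← mulₗ_apply, map_add, map_neg, map_smul] at h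
  simp only [mulₗ_apply, Pi.add_apply, Pi.neg_apply, Pi.smul_apply, mul2_v_single_apply] at h
  by_contra! hne
  refine h ?_
  rw [ite_eq_right_iff.2 fun h1 => ?_, ite_eq_right_iff.2 fun h1 => ?_, neg_zero, smul_zero,
    add_zero]
  · rw [hne _ (by simp) (by simp) h1, mul_zero]
  · rw [hne _ (by simp; omega) (by simp) h1, mul_zero]

/-- The string with `1`s at the 0-indexed positions `s j`. As `w_i` has its `1` at position `i - 1`,
`e_i = -w_i + q⁻¹ w_{i+1}` has leading string `ofRange n ![i]`, and `Ψ(e_s)` has `ofRange n s`. -/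
def ofRange (n : ℕ) (s : Fin k → ℕ) : Fin n → Fin 2 :=
  fun j => if (j : ℕ) ∈ Set.range s then 1 else 0

lemma mem_ones_ofRange {s : Fin k → ℕ} {j : Fin n} :
    j ∈ ones (ofRange n s) ↔ (j : ℕ) ∈ Set.range s := by
  simp [ofRange]

lemma ofRange_zero (s : Fin 0 → ℕ) : ofRange n s = ⊥ := by
  ext1 j
  simp [ofRange, bot_eq_zero]

lemma ofRange_succ (s : Fin (k + 1) → ℕ) (hL : s (Fin.last k) < n) :
    ofRange n s = update (ofRange n fun j => s j.castSucc) ⟨s (Fin.last k), hL⟩ 1 := by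
  ext1 j
  rcases eq_or_ne j ⟨s (Fin.last k), hL⟩ with rfl | hj
  · simp [ofRange]
  · have hj' : (j : ℕ) ≠ s (Fin.last k) := fun h => hj (Fin.ext h)
    simp only [ofRange, update_of_ne hj, Set.mem_range, Fin.exists_fin_succ', hj'.symm, or_false]

lemma ones_ofRange_eq_map {s : Fin k → ℕ} (hs : StrictMono s) (hsn : ∀ j, s j < n) :
    ones (ofRange n s) = univ.map ⟨fun j => ⟨s j, hsn j⟩, fun _ _ h => hs.injective
      (congrArg Fin.val h)⟩ := by
  ext j
  rw [mem_ones_ofRange, mem_map]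
  simp [Fin.ext_iff, eq_comm]
  rfl

lemma wt_ofRange {s : Fin k → ℕ} (hs : StrictMono s) (hsn : ∀ j, s j < n) :
    wt (ofRange n s) = k := by
  rw [wt_eq_card_ones, ones_ofRange_eq_map hs hsn, card_map, card_univ, Fintype.card_fin]

lemma posSum_ofRange {s : Fin k → ℕ} (hs : StrictMono s) (hsn : ∀ j, s j < n) :
    posSum (ofRange n s) = ∑ j, s j := by
  rw [posSum, ones_ofRange_eq_map hs hsn, sum_map]
  rfl

lemma ofRange_injective {s t : Fin k → ℕ} (hs : StrictMono s) (ht : StrictMono t)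
    (hsn : ∀ j, s j < n) (htn : ∀ j, t j < n) (h : ofRange n s = ofRange n t) : s = t := by
  refine (hs.range_inj ht).1 (Set.ext fun x => ?_)
  have key : ∀ {u : Fin k → ℕ}, (∀ j, u j < n) → (x ∈ Set.range u ↔
      ∃ hx : x < n, (⟨x, hx⟩ : Fin n) ∈ ones (ofRange n u)) := fun hun => by
    simp only [mem_ones_ofRange]
    exact ⟨fun hx => ⟨by obtain ⟨j, rfl⟩ := hx; exact hun j, hx⟩, fun ⟨_, hx⟩ => hx⟩
  rw [key hsn, key htn, h]

lemma Psi_e_support (s : Fin k → ℕ) (hs : StrictMono s) (hsn : ∀ j, 1 ≤ s j ∧ s j < n)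
    {γ : Fin n → Fin 2} (hγ : Psi n k (fun j => e n (s j)) γ ≠ 0) :
    wt γ = k ∧ posSum γ ≤ ∑ j, s j ∧ (posSum γ = ∑ j, s j → γ = ofRange n s) := by
  induction k generalizing γ with
  | zero =>
    obtain rfl : γ = ⊥ := by simpa [Psi, v0_eq, v] using hγ
    simp [wt_eq_card_ones, posSum, ones, bot_eq_zero, ofRange_zero]
  | succ k ih =>
    rw [Psi_succ] at hγ
    obtain ⟨p, hp1, hp2, hγp, hne⟩ :=
      exists_of_mul2_e_apply_ne_zero (hsn _).1 (hsn _).2 hγ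
    obtain ⟨hwt, hsum, heq⟩ := ih (fun j => s j.castSucc) (hs.comp Fin.strictMono_castSucc)
      (fun j => hsn _) hne
    have hwt' := wt_update_zero_add_one hγp
    have hsum' := posSum_update_zero_add hγp
    rw [Fin.sum_univ_castSucc]
    refine ⟨by omega, by omega, fun h => ?_⟩
    have hpL : p = ⟨s (Fin.last k), (hsn _).2⟩ := Fin.ext (by simp only; omega)
    rw [ofRange_succ s (hsn _).2, ← hpL, ← heq (by omega), update_idem,
      update_eq_self_iff.2 hγp.symm]

lemma Psi_e_ofRange_ne_zero (s : Fin k → ℕ) (hs : StrictMono s) (hsn : ∀ j, 1 ≤ s j ∧ s j < n) :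
    Psi n k (fun j => e n (s j)) (ofRange n s) ≠ 0 := by
  induction k with
  | zero => simp [Psi, v0_eq, v, ofRange_zero]
  | succ k ih =>
    set s' : Fin k → ℕ := fun j => s j.castSucc
    set L : Fin n := ⟨s (Fin.last k), (hsn _).2⟩
    have hs' : StrictMono s' := hs.comp Fin.strictMono_castSucc
    have hL : ofRange n s' L = 0 := by
      simpa [ofRange, s', L] using fun j => (hs (Fin.castSucc_lt_last j)).ne
    have hγ : ofRange n s = update (ofRange n s') L 1 := ofRange_succ s (hsn _).2
    have hγL : ofRange n s L = 1 := by rw [hγ, update_self]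
    have hupd : update (ofRange n s) L 0 = ofRange n s' := by
      rw [hγ, update_idem, update_eq_self_iff.2 hL.symm]
    have hbelow : ∀ {p : Fin n}, (p : ℕ) + 1 = s (Fin.last k) → ofRange n s p = 1 →
        Psi n k (fun j => e n (s' j)) (update (ofRange n s) p 0) = 0 := by
      intro p hp hγp
      by_contra hne
      have hle := (Psi_e_support s' hs' (fun j => hsn _) hne).2.1
      have hsum := posSum_update_zero_add hγp
      rw [posSum_ofRange hs (fun j => (hsn j).2), Fin.sum_univ_castSucc] at hsum
      change _ ≤ ∑ j : Fin k, s j.castSucc at hle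
      omega
    rw [Psi_succ, e_eq (hsn _).1 (hsn _).2, ← mulₗ_apply, map_add, map_neg, map_smul]
    simp only [mulₗ_apply, Pi.add_apply, Pi.neg_apply, Pi.smul_apply, smul_eq_mul,
      mul2_v_single_apply]
    have hL1 := (hsn (Fin.last k)).1
    rw [ite_eq_right_iff.2 fun hp => by rw [hbelow (by simp only; omega) hp, mul_zero],
      neg_zero, zero_add, if_pos hγL, hupd]
    exact mul_ne_zero (inv_ne_zero q_ne_zero)
      (mul_ne_zero (pow_ne_zero _ (by norm_num)) (ih s' hs' fun j => hsn _))

lemma mem_Tk_iff {f : T n} : f ∈ Tk n k ↔ ∀ γ, f γ ≠ 0 → wt γ = k := by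
  refine ⟨fun hf => ?_, fun hf => ?_⟩
  · induction hf using Submodule.span_induction with
    | mem f hf =>
      obtain ⟨α, hα, rfl⟩ := hf
      intro γ hγ
      by_cases h : γ = α
      · rwa [h]
      · simp [v, h] at hγ
    | zero => simp
    | add f g _ _ hf hg =>
      intro γ hγ
      by_cases h : f γ = 0
      · exact hg γ (by simpa [h] using hγ)
      · exact hf γ h
    | smul c f _ hf => exact fun γ hγ => hf γ (right_ne_zero_of_mul hγ)
  · rw [eq_sum_smul_v f]
    refine Submodule.sum_mem _ fun γ _ => ?_
    by_cases h : f γ = 0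
    · simp [h]
    · exact Submodule.smul_mem _ _ (Submodule.subset_span ⟨γ, hf γ h, rfl⟩)

lemma Psi_e_mem_Hk (s : Fin k → ℕ) (hs : StrictMono s) (hsn : ∀ j, 1 ≤ s j ∧ s j < n) :
    Psi n k (fun j => e n (s j)) ∈ Hk n k :=
  ⟨En_Psi_e s hsn, mem_Tk_iff.2 fun _ hγ => (Psi_e_support s hs hsn hγ).1⟩

lemma linearIndependent_of_triangular {ι σ R β : Type*} [Fintype ι] [Ring R] [NoZeroDivisors R]
    [LinearOrder β] (f : ι → σ → R) (τ : ι → σ) (w : ι → β) (hdiag : ∀ i, f i (τ i) ≠ 0)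
    (hlow : ∀ i j, f j (τ i) ≠ 0 → j ≠ i → w i < w j) : LinearIndependent R f := by
  rw [Fintype.linearIndependent_iff]
  intro g hg
  by_contra! hne
  obtain ⟨i, hi, hmax⟩ := (univ.filter (g · ≠ 0)).exists_max_image w
    (by simpa [Finset.Nonempty] using hne)
  have h := congrFun hg (τ i)
  simp only [Finset.sum_apply, Pi.smul_apply, smul_eq_mul, Pi.zero_apply] at h
  rw [sum_eq_single i] at h
  · exact (mem_filter.1 hi).2 ((mul_eq_zero.1 h).resolve_right (hdiag i))
  · intro j _ hji
    by_contra hj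
    exact (hlow i j (right_ne_zero_of_mul hj) hji).not_ge
      (hmax j (mem_filter.2 ⟨mem_univ j, left_ne_zero_of_mul hj⟩))
  · simp

lemma eq_zero_of_En_eq_zero (hn : 0 < n) {x : T n} (hx : En n x = 0)
    (h0 : ∀ γ : Fin n → Fin 2, γ ⟨0, hn⟩ = 0 → x γ = 0) : x = 0 := by
  ext γ
  rcases fin2_eq_zero_or_one (γ ⟨0, hn⟩) with hγ | hγ
  · exact h0 γ hγ
  -- `(E x)(γ[0 ↦ 0])` is a nonzero multiple of `x γ` plus values of `x` at strings
  -- starting with `0`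
  have h := congrFun hx (update γ ⟨0, hn⟩ 0)
  simp only [En, LinearMap.coe_mk, AddHom.coe_mk, Pi.zero_apply] at h
  rw [sum_eq_single ⟨0, hn⟩] at h
  · have hupd : update γ ⟨0, hn⟩ 1 = γ := hγ ▸ update_eq_self _ _
    simpa [hupd, q_ne_zero] using h
  · intro i _ hi
    split_ifs with hi0
    · rw [h0 _ (by rw [update_of_ne (Ne.symm hi), update_self]), mul_zero]
    · rfl
  · simp

lemma finrank_Hk_le (hn : 0 < n) (k : ℕ) :
    Module.finrank K (Hk n k) ≤
      Fintype.card {α : Fin n → Fin 2 // wt α = k ∧ α ⟨0, hn⟩ = 0} := by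
  let res := (LinearMap.funLeft K K (Subtype.val :
    {α : Fin n → Fin 2 // wt α = k ∧ α ⟨0, hn⟩ = 0} → _)).comp (Hk n k).subtype
  have hres : Function.Injective res := by
    rw [← LinearMap.ker_eq_bot, LinearMap.ker_eq_bot']
    intro x hx
    refine Subtype.ext (eq_zero_of_En_eq_zero hn x.2.1 fun γ hγ => ?_)
    by_cases hwt : wt γ = k
    · exact congrFun hx ⟨γ, hwt, hγ⟩
    · by_contra h
      exact hwt (mem_Tk_iff.1 x.2.2 γ h)
  simpa using LinearMap.finrank_le_finrank_of_injective hres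

lemma exists_ofRange_eq (hn : 0 < n) {α : Fin n → Fin 2} (h0 : α ⟨0, hn⟩ = 0) :
    ∃ s : Fin (wt α) → ℕ, StrictMono s ∧ (∀ j, 1 ≤ s j ∧ s j < n) ∧ ofRange n s = α := by
  let s : Fin (wt α) → ℕ := fun j => (ones α).orderEmbOfFin rfl j
  have hrange : ∀ x : Fin n, (x : ℕ) ∈ Set.range s ↔ α x = 1 := fun x => by
    rw [← mem_ones, ← Finset.mem_coe, ← range_orderEmbOfFin (ones α) rfl]
    exact ⟨fun ⟨y, hy⟩ => ⟨y, Fin.ext hy⟩, fun ⟨y, hy⟩ => ⟨y, congrArg Fin.val hy⟩⟩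
  refine ⟨s, fun a b hab => ((ones α).orderEmbOfFin rfl).strictMono hab, fun j => ?_, ?_⟩
  · have hj : α ((ones α).orderEmbOfFin rfl j) = 1 := mem_ones.1 (orderEmbOfFin_mem _ _ j)
    refine ⟨Nat.one_le_iff_ne_zero.2 fun h => ?_, Fin.is_lt _⟩
    rw [show (ones α).orderEmbOfFin rfl j = ⟨0, hn⟩ from Fin.ext h, h0] at hj
    exact absurd hj (by decide)
  · ext1 x
    rcases fin2_eq_zero_or_one (α x) with hx | hx <;> simp [ofRange, hrange, hx]

abbrev IncSeq (n k : ℕ) : Type := {s : Fin k → ℕ // StrictMono s ∧ ∀ i, 1 ≤ s i ∧ s i ≤ n - 1}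

lemma IncSeq.bounds (s : IncSeq n k) (j : Fin k) : 1 ≤ s.1 j ∧ s.1 j < n :=
  ⟨(s.2.2 j).1, by have := s.2.2 j; omega⟩

instance : Fintype (IncSeq n k) :=
  Fintype.ofInjective (fun s j => (⟨s.1 j, (s.bounds j).2⟩ : Fin n))
    fun _ _ h => Subtype.ext (funext fun j => congrArg Fin.val (congrFun h j))

lemma card_le_card_IncSeq (hn : 0 < n) :
    Fintype.card {α : Fin n → Fin 2 // wt α = k ∧ α ⟨0, hn⟩ = 0} ≤ Fintype.card (IncSeq n k) := by
  refine Fintype.card_le_of_surjective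
    (fun s => ⟨ofRange n s.1, wt_ofRange s.2.1 fun j => (s.bounds j).2, ?_⟩) ?_
  · simp only [ofRange, Set.mem_range, ite_eq_right_iff]
    rintro ⟨j, hj⟩
    exact absurd (s.bounds j).1 (by omega)
  · rintro ⟨α, rfl, h0⟩
    obtain ⟨s, hs, hsn, hα⟩ := exists_ofRange_eq hn h0
    exact ⟨⟨s, hs, fun j => ⟨(hsn j).1, by have := hsn j; omega⟩⟩, Subtype.ext hα⟩

lemma linearIndependent_Psi_e :
    LinearIndependent K fun s : IncSeq n k => Psi n k fun j => e n (s.1 j) := by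
  refine linearIndependent_of_triangular _ (fun s => ofRange n s.1) (fun s => ∑ j, s.1 j)
    (fun s => Psi_e_ofRange_ne_zero s.1 s.2.1 s.bounds) fun s t hne hts => ?_
  obtain ⟨-, hle, heq⟩ := Psi_e_support t.1 t.2.1 t.bounds hne
  rw [posSum_ofRange s.2.1 fun j => (s.bounds j).2] at hle heq
  refine hle.lt_of_ne fun h => hts (Subtype.ext ?_)
  exact (ofRange_injective s.2.1 t.2.1 (fun j => (s.bounds j).2) (fun j => (t.bounds j).2)
    (heq h)).symm

end UqGl11

open UqGl11 in
theorem stmt1_general (n k : ℕ) (hn : 2 ≤ n) :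
    ∃ bas : Module.Basis {s : Fin k → ℕ // StrictMono s ∧ ∀ i, 1 ≤ s i ∧ s i ≤ n - 1} K (Hk n k),
      ∀ s, (bas s : T n) = Psi n k (fun i => e n (s.1 i)) := by
  let b : IncSeq n k → Hk n k := fun s => ⟨_, Psi_e_mem_Hk s.1 s.2.1 s.bounds⟩
  have hli : LinearIndependent K b :=
    LinearIndependent.of_comp (Hk n k).subtype linearIndependent_Psi_e
  have hcard : Fintype.card (IncSeq n k) = Module.finrank K (Hk n k) :=
    le_antisymm hli.fintype_card_le_finrank
      ((finrank_Hk_le (by omega) k).trans (card_le_card_IncSeq _))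
  exact ⟨.mk hli (hli.span_eq_top_of_card_eq_finrank' hcard).ge,
    fun s => by rw [Module.Basis.coe_mk]⟩

theorem stmt1 (n k : ℕ) (hn : 2 ≤ n) (hk1 : 1 ≤ k) (hk2 : k ≤ n - 1) :
    ∃ bas : Module.Basis {s : Fin k → ℕ // StrictMono s ∧ ∀ i, 1 ≤ s i ∧ s i ≤ n - 1} K (Hk n k),
      ∀ s, (bas s : T n) = Psi n k (fun i => e n (s.1 i)) :=
  stmt1_general n k hn

end
end

section
/- Let n ≥ 2 and 1 ≤ k ≤ n−1. For every string s ∈ S_k, the vector φ(s) lies in H_k; that is, E_n(φ(s)) = 0 and φ(s) belongs to the span T_n^{(k)} of the basis vectors with exactly k entries equal to 1. -/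
open scoped BigOperators

set_option maxHeartbeats 1000000
set_option synthInstance.maxHeartbeats 400000

noncomputable section

/-!
`E` obeys a twisted Leibniz rule on concatenations,
`E (f ⊗ g) = q^{-|g|} E f ⊗ g + (-1)^w f ⊗ E g` for `f` of weight `w`, so `φ(s)` is killed by `E`
as soon as each factor is. Clearly `E v₀ = 0`. In `E Θ_b` the string with zeros at positions
`r ≠ i` arises twice, by removing first `r` then `i` or the other way round, and the two
contributions differ exactly by the sign `(-1)` coming from the one `1` that is skipped over.
Every factor is homogeneous in the number of `1`s, so `φ(s)` lies in `T_n^{(k)}`.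
-/

open Finset Function

def weightSpace (n w : ℕ) : Submodule K (T n) where
  carrier := {f | ∀ γ, wt γ ≠ w → f γ = 0}
  add_mem' hf hg γ hγ := by simp [hf γ hγ, hg γ hγ]
  zero_mem' _ _ := rfl
  smul_mem' c _ hf γ hγ := by simp [hf γ hγ]

lemma v_mem_weightSpace {n : ℕ} (α : Fin n → Fin 2) : v n α ∈ weightSpace n (wt α) :=
  fun _ hγ => if_neg fun h => hγ (congrArg wt h)

lemma weightSpace_le_Tk (n k : ℕ) : weightSpace n k ≤ Tk n k := by
  intro f hf
  have hf_eq : f = ∑ α ∈ {α | wt α = k}, f α • v n α := by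
    funext γ
    by_cases hγ : wt γ = k
    · simp [Finset.sum_apply, v, hγ]
    · simp [Finset.sum_apply, v, hf γ hγ, hγ]
  rw [hf_eq]
  exact Submodule.sum_mem _ fun α hα => Submodule.smul_mem _ _
    (Submodule.subset_span ⟨α, (mem_filter.1 hα).2, rfl⟩)

lemma v0_mem_weightSpace (n : ℕ) : v0 n ∈ weightSpace n 0 := by
  unfold v0
  simpa [wt] using v_mem_weightSpace (fun _ : Fin n => (0 : Fin 2))

lemma wt_hole {b : ℕ} (r : Fin b) :
    wt (fun i => if i = r then (0 : Fin 2) else 1) = b - 1 := by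
  have h : ({i | (if i = r then (0 : Fin 2) else 1) = 1} : Finset (Fin b)) = univ.erase r := by
    ext j
    by_cases hj : j = r <;> simp [hj]
  rw [wt, h, card_erase_of_mem (mem_univ r), card_univ, Fintype.card_fin]

lemma Theta_mem_weightSpace (b : ℕ) : Theta b ∈ weightSpace b (b - 1) :=
  Submodule.sum_mem _ fun r _ => Submodule.smul_mem _ _ (wt_hole r ▸ v_mem_weightSpace _)

lemma wt_eq_wt_castAdd_add_wt_natAdd {a b : ℕ} (γ : Fin (a + b) → Fin 2) :
    wt γ = wt (fun i => γ (Fin.castAdd b i)) + wt (fun i => γ (Fin.natAdd a i)) := by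
  simp only [wt, card_filter, Fin.sum_univ_add]

lemma conc_mem_weightSpace {a b w₁ w₂ : ℕ} {f : T a} {g : T b}
    (hf : f ∈ weightSpace a w₁) (hg : g ∈ weightSpace b w₂) :
    conc f g ∈ weightSpace (a + b) (w₁ + w₂) := by
  intro γ hγ
  rw [wt_eq_wt_castAdd_add_wt_natAdd] at hγ
  by_cases h₁ : wt (fun i => γ (Fin.castAdd b i)) = w₁
  · rw [conc, hg _ fun h₂ => hγ (by rw [h₁, h₂]), mul_zero]
  · rw [conc, hf _ h₁, zero_mul]

def onesBefore {n : ℕ} (β : Fin n → Fin 2) (i : Fin n) : ℕ := #{j | j < i ∧ β j = 1}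

lemma En_apply (n : ℕ) (f : T n) (β : Fin n → Fin 2) :
    En n f β = ∑ i, if β i = 0 then
      ((-1 : K) ^ onesBefore β i * q⁻¹ ^ (n - 1 - (i : ℕ))) * f (update β i 1) else 0 :=
  rfl

lemma En_v (n : ℕ) (α : Fin n → Fin 2) :
    En n (v n α) = ∑ i, if α i = 1 then
      ((-1 : K) ^ onesBefore α i * q⁻¹ ^ (n - 1 - (i : ℕ))) • v n (update α i 0) else 0 := by
  funext β
  rw [En_apply, Finset.sum_apply]
  refine sum_congr rfl fun i _ => ?_
  by_cases h : β i = 0 ∧ α i = 1 ∧ ∀ j ≠ i, β j = α j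
  · obtain ⟨hβ, hα, hrest⟩ := h
    have hones : onesBefore β i = onesBefore α i := by
      unfold onesBefore
      congr 1
      exact filter_congr fun j _ => and_congr_right fun hj => by rw [hrest j hj.ne]
    have hup : update β i 1 = α := update_eq_iff.2 ⟨hα.symm, hrest⟩
    have hβ' : β = update α i 0 := eq_update_iff.2 ⟨hβ, hrest⟩
    simp [v, hβ, hα, hup, ← hβ', hones]
  · have hup : ¬ (β i = 0 ∧ update β i 1 = α) := fun ⟨hβ, hup⟩ =>
      h ⟨hβ, (update_eq_iff.1 hup).1.symm, (update_eq_iff.1 hup).2⟩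
    have hβ' : ¬ (α i = 1 ∧ β = update α i 0) := fun ⟨hα, hβ'⟩ =>
      h ⟨(eq_update_iff.1 hβ').1, hα, (eq_update_iff.1 hβ').2⟩
    simp only [v, ite_apply, Pi.smul_apply, Pi.zero_apply, smul_eq_mul]
    split_ifs <;> simp_all

lemma En_v0 (n : ℕ) : En n (v0 n) = 0 := by
  simp [v0, En_v]

lemma onesBefore_hole {b : ℕ} (r i : Fin b) :
    onesBefore (fun j => if j = r then (0 : Fin 2) else 1) i
      = if r < i then (i : ℕ) - 1 else i := by
  have h : ({j | j < i ∧ (if j = r then (0 : Fin 2) else 1) = 1} : Finset (Fin b))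
      = (Iio i).erase r := by
    ext j
    by_cases hj : j = r <;> simp [hj]
  rw [onesBefore, h]
  split_ifs with hr
  · rw [card_erase_of_mem (mem_Iio.2 hr), Fin.card_Iio]
  · rw [erase_eq_of_notMem (by simpa using hr), Fin.card_Iio]

lemma En_Theta (b : ℕ) : En b (Theta b) = 0 := by
  let hole : Fin b → Fin b → Fin 2 := fun r j => if j = r then 0 else 1
  let F : Fin b → Fin b → T b := fun r i =>
    ((-1 : K) ^ (r : ℕ) * q⁻¹ ^ (b - 1 - (r : ℕ))) •
      if hole r i = 1 then
        ((-1 : K) ^ onesBefore (hole r) i * q⁻¹ ^ (b - 1 - (i : ℕ))) • v b (update (hole r) i 0)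
      else 0
  have hF_of_lt : ∀ r i, r < i → F r i = -F i r := by
    intro r i hri
    have hhole : update (hole r) i 0 = update (hole i) r 0 := by
      funext j
      by_cases hjr : j = r <;> by_cases hji : j = i <;> simp [update_apply, hole, hjr, hji]
    obtain ⟨k, hk⟩ := Nat.exists_eq_add_of_lt (Fin.lt_def.1 hri)
    simp only [F, hole, onesBefore_hole, hri, hri.ne, hri.ne', not_lt_of_gt hri, if_true,
      if_false, hhole, smul_smul, ← neg_smul]
    congr 1
    rw [hk, Nat.add_sub_cancel]
    ring
  have hF : ∀ r i, F r i = -F i r := by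
    intro r i
    rcases lt_trichotomy r i with hri | rfl | hri
    · exact hF_of_lt r i hri
    · simp [F, hole]
    · rw [hF_of_lt i r hri, neg_neg]
  have hsum : En b (Theta b) = ∑ r, ∑ i, F r i := by
    simp only [Theta, map_sum, map_smul, En_v, smul_sum, F, hole]
  have hneg : En b (Theta b) = -En b (Theta b) := calc
    En b (Theta b) = ∑ r, ∑ i, -F i r := by
      rw [hsum]; exact sum_congr rfl fun r _ => sum_congr rfl fun i _ => hF r i
    _ = -En b (Theta b) := by rw [hsum, sum_comm]; simp only [sum_neg_distrib]
  exact self_eq_neg.1 hneg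

lemma zero_conc {a b : ℕ} (g : T b) : conc (0 : T a) g = 0 := by
  funext γ; simp [conc]

lemma conc_zero {a b : ℕ} (f : T a) : conc f (0 : T b) = 0 := by
  funext γ; simp [conc]

lemma castAdd_lt_natAdd {a b : ℕ} (i : Fin a) (j : Fin b) : Fin.castAdd b i < Fin.natAdd a j := by
  rw [Fin.lt_def, Fin.val_castAdd, Fin.val_natAdd]
  omega

lemma onesBefore_castAdd {a b : ℕ} (β : Fin (a + b) → Fin 2) (i : Fin a) :
    onesBefore β (Fin.castAdd b i) = onesBefore (fun j => β (Fin.castAdd b j)) i := by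
  have hlt : ∀ j : Fin b, ¬ Fin.natAdd a j < Fin.castAdd b i := fun j =>
    (castAdd_lt_natAdd i j).not_gt
  simp only [onesBefore, card_filter, Fin.sum_univ_add, hlt, false_and, if_false, sum_const_zero,
    add_zero]
  rfl

lemma onesBefore_natAdd {a b : ℕ} (β : Fin (a + b) → Fin 2) (i : Fin b) :
    onesBefore β (Fin.natAdd a i)
      = wt (fun j => β (Fin.castAdd b j)) + onesBefore (fun j => β (Fin.natAdd a j)) i := by
  simp only [onesBefore, wt, card_filter, Fin.sum_univ_add, castAdd_lt_natAdd, true_and,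
    Fin.natAdd_lt_natAdd_iff]

lemma En_conc {a b w : ℕ} {f : T a} (hf : f ∈ weightSpace a w) (g : T b) :
    En (a + b) (conc f g) = q⁻¹ ^ b • conc (En a f) g + (-1 : K) ^ w • conc f (En b g) := by
  funext β
  simp only [Pi.add_apply, Pi.smul_apply, smul_eq_mul, En_apply, conc, Fin.sum_univ_add,
    Finset.mul_sum, Finset.sum_mul]
  congr 1 <;> refine sum_congr rfl fun i _ => ?_
  · rw [update_comp_eq_of_injective' _ (Fin.castAdd_injective a b),
      update_comp_eq_of_forall_ne' _ _ fun j => (castAdd_lt_natAdd i j).ne', onesBefore_castAdd]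
    have hexp : a + b - 1 - (Fin.castAdd b i : ℕ) = (a - 1 - i) + b := by
      rw [Fin.val_castAdd]; omega
    split_ifs
    · rw [hexp, pow_add]; ring
    · simp
  · rw [update_comp_eq_of_injective' _ (Fin.natAdd_injective b a),
      update_comp_eq_of_forall_ne' _ _ fun j => (castAdd_lt_natAdd j i).ne, onesBefore_natAdd]
    have hexp : a + b - 1 - (Fin.natAdd a i : ℕ) = b - 1 - i := by
      rw [Fin.val_natAdd]; omega
    by_cases hw : wt (fun j => β (Fin.castAdd b j)) = w
    · split_ifs
      · rw [hexp, hw]; ring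
      · simp
    · simp [hf _ hw]

lemma lenOf_eq : ∀ (l : ℕ) (a : Fin (l + 1) → ℕ) (b : Fin l → ℕ),
    lenOf l a b = ∑ i, a i + ∑ i, b i
  | 0, a, b => by simp [lenOf]
  | l + 1, a, b => by
    rw [lenOf, lenOf_eq l, Fin.sum_univ_succ a, Fin.sum_univ_succ b]
    ring

lemma rawphi_mem_weightSpace : ∀ (l : ℕ) (a : Fin (l + 1) → ℕ) (b : Fin l → ℕ),
    rawphi l a b ∈ weightSpace (lenOf l a b) (∑ i, (b i - 1))
  | 0, a, _ => by rw [univ_eq_empty, sum_empty]; exact v0_mem_weightSpace (a 0)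
  | l + 1, a, b => by
    rw [Fin.sum_univ_succ, ← zero_add (b 0 - 1)]
    exact conc_mem_weightSpace
      (conc_mem_weightSpace (v0_mem_weightSpace _) (Theta_mem_weightSpace _))
      (rawphi_mem_weightSpace l (fun i => a i.succ) (fun i => b i.succ))

lemma En_rawphi : ∀ (l : ℕ) (a : Fin (l + 1) → ℕ) (b : Fin l → ℕ),
    En (lenOf l a b) (rawphi l a b) = 0
  | 0, a, _ => En_v0 (a 0)
  | l + 1, a, b => by
    have hblock := conc_mem_weightSpace (v0_mem_weightSpace (a 0)) (Theta_mem_weightSpace (b 0))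
    have hEblock : En _ (conc (v0 (a 0)) (Theta (b 0))) = 0 := by
      rw [En_conc (v0_mem_weightSpace _), En_v0, En_Theta, zero_conc, conc_zero, smul_zero,
        smul_zero, add_zero]
    change En (a 0 + b 0 + _) (conc (conc (v0 (a 0)) (Theta (b 0))) _) = 0
    rw [En_conc hblock, hEblock, En_rawphi l, zero_conc, conc_zero, smul_zero, smul_zero, add_zero]

theorem stmt5_general (n k : ℕ)
    (s : GString) (hs : memSk n k s) :
    En n (phi n s) = 0 ∧ phi n s ∈ Tk n k := by
  obtain ⟨-, rfl, hlen⟩ := hs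
  obtain rfl : lenOf s.l s.a s.b = n := (lenOf_eq _ _ _).trans hlen
  have hphi : phi _ s = rawphi s.l s.a s.b := by rw [phi, dif_pos rfl]; rfl
  rw [hphi]
  exact ⟨En_rawphi _ _ _, weightSpace_le_Tk _ _ (rawphi_mem_weightSpace _ _ _)⟩

theorem stmt5 (n k : ℕ) (hn : 2 ≤ n) (hk1 : 1 ≤ k) (hk2 : k ≤ n - 1)
    (s : GString) (hs : memSk n k s) :
    En n (phi n s) = 0 ∧ phi n s ∈ Tk n k :=
  stmt5_general n k s hs

end
end

section
/- Let n ≥ 2. For all t and j with 1 ≤ t ≤ n−1 and 1 ≤ j ≤ n−1, the following hold in T_n: Φ_t(e_j) = q·e_j + e_{j+1} if j = t−1; Φ_t(e_j) = −q⁻¹·e_j if j = t; Φ_t(e_j) = e_{j−1} + q·e_j if j = t+1; and Φ_t(e_j) = q·e_j if |j − t| ≥ 2. -/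
open scoped BigOperators

set_option maxHeartbeats 1000000
set_option synthInstance.maxHeartbeats 400000

noncomputable section

/-! `Φ_t` scales `w_m` by `q` unless `m ∈ {t, t + 1}`, and on `w_t, w_{t+1}` it acts through the
`(1,0)` and `(0,1)` columns of the R-matrix: `w_t ↦ w_{t+1}`, `w_{t+1} ↦ w_t + (q - q⁻¹) w_{t+1}`.
Since `e_j` only involves `w_j` and `w_{j+1}`, each case is then a two-term computation in `ℂ(q)`. -/

open Function

lemma update_update_eq_iff {ι X : Type*} [DecidableEq ι] {i j : ι} (hij : i ≠ j)
    {α β : ι → X} {a b : X} :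
    update (update β i a) j b = α ↔ (a, b) = (α i, α j) ∧ ∀ k, k ≠ i → k ≠ j → β k = α k := by
  simp only [funext_iff, update_apply, Prod.mk.injEq]
  constructor
  · intro h
    exact ⟨⟨by simpa [hij] using h i, by simpa using h j⟩,
      fun k hki hkj => by simpa [hki, hkj] using h k⟩
  · rintro ⟨⟨rfl, rfl⟩, h⟩ k
    by_cases hkj : k = j
    · simp [hkj]
    by_cases hki : k = i
    · simp [hki, hij]
    simp [hki, hkj, h k hki hkj]

lemma phiAux_v {n : ℕ} {i j : Fin n} (hij : i ≠ j) (α : Fin n → Fin 2) :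
    PhiAux n i j (v n α) =
      ∑ p : Fin 2 × Fin 2, Rmat p (α i, α j) • v n (update (update α i p.1) j p.2) := by
  funext β
  simp only [PhiAux, LinearMap.coe_mk, AddHom.coe_mk, Finset.sum_apply, Pi.smul_apply, v,
    smul_eq_mul, mul_ite, mul_one, mul_zero, @eq_comm _ β, update_update_eq_iff hij, ite_and,
    Finset.sum_ite_eq', Finset.mem_univ, if_true]
  simp_rw [@eq_comm _ (β _)]

section PhiAux

variable {n : ℕ} {i j : Fin n} (hij : i ≠ j) {α : Fin n → Fin 2}
include hij

lemma phiAux_v_of_zero_zero (hi : α i = 0) (hj : α j = 0) :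
    PhiAux n i j (v n α) = q • v n α := by
  have hα : update (update α i 0) j 0 = α := by simp [update_update_eq_iff hij, hi, hj]
  simp [phiAux_v hij, Rmat, hi, hj, hα]

lemma phiAux_v_of_one_zero (hi : α i = 1) (hj : α j = 0) :
    PhiAux n i j (v n α) = v n (update (update α i 0) j 1) := by
  simp [phiAux_v hij, Rmat, hi, hj]

lemma phiAux_v_of_zero_one (hi : α i = 0) (hj : α j = 1) :
    PhiAux n i j (v n α) = v n (update (update α i 1) j 0) + (q - q⁻¹) • v n α := by
  have hα : update (update α i 0) j 1 = α := by simp [update_update_eq_iff hij, hi, hj]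
  simp [phiAux_v hij, Fintype.sum_prod_type, Rmat, hi, hj, hα]
  exact add_comm _ _

end PhiAux

section Phi

variable {n t : ℕ} (ht1 : 1 ≤ t) (ht2 : t < n)
include ht1 ht2

lemma Phi_eq_phiAux : Phi n t = PhiAux n ⟨t - 1, by omega⟩ ⟨t, ht2⟩ := by
  rw [Phi, dif_pos ⟨ht1, ht2⟩]

lemma Phi_w_of_ne {m : ℕ} (hmt : m ≠ t) (hmt' : m ≠ t + 1) : Phi n t (w n m) = q • w n m := by
  rw [Phi_eq_phiAux ht1 ht2, w]
  exact phiAux_v_of_zero_zero (by simp [Fin.ext_iff]; omega) (by simp; omega) (by simp; omega)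

lemma Phi_w_self : Phi n t (w n t) = w n (t + 1) := by
  rw [Phi_eq_phiAux ht1 ht2, w, phiAux_v_of_one_zero (by simp [Fin.ext_iff]; omega)
    (by simp; omega) (by simp), w]
  congr 1
  funext k
  simp only [update_apply, Fin.ext_iff]
  split_ifs <;> first | rfl | omega

lemma Phi_w_succ : Phi n t (w n (t + 1)) = w n t + (q - q⁻¹) • w n (t + 1) := by
  rw [Phi_eq_phiAux ht1 ht2, w, phiAux_v_of_zero_one (by simp [Fin.ext_iff]; omega)
    (by simp; omega) (by simp), w]
  congr 2
  funext k
  simp only [update_apply, Fin.ext_iff]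
  split_ifs <;> first | rfl | omega

end Phi

theorem stmt6_general (n t j : ℕ) (ht1 : 1 ≤ t) (ht2 : t ≤ n - 1) :
    (j + 1 = t → Phi n t (e n j) = q • e n j + e n (j + 1)) ∧
    (j = t → Phi n t (e n j) = -q⁻¹ • e n j) ∧
    (j = t + 1 → Phi n t (e n j) = e n (j - 1) + q • e n j) ∧
    ((j + 2 ≤ t ∨ t + 2 ≤ j) → Phi n t (e n j) = q • e n j) := by
  have htn : t < n := by omega
  have hq : q ≠ 0 := RatFunc.X_ne_zero
  refine ⟨fun h => ?_, fun h => ?_, fun h => ?_, fun h => ?_⟩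
  · subst h
    simp only [e, map_add, map_neg, map_smul, Phi_w_of_ne ht1 htn (m := j) (by omega) (by omega),
      Phi_w_self ht1 htn]
    funext β
    simp only [Pi.add_apply, Pi.neg_apply, Pi.smul_apply, smul_eq_mul]
    field_simp
    ring
  · subst h
    simp only [e, map_add, map_neg, map_smul, Phi_w_self ht1 htn, Phi_w_succ ht1 htn]
    funext β
    simp only [Pi.add_apply, Pi.neg_apply, Pi.smul_apply, smul_eq_mul]
    field_simp
    ring
  · subst h
    simp only [e, map_add, map_neg, map_smul, Nat.add_sub_cancel, Phi_w_succ ht1 htn,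
      Phi_w_of_ne ht1 htn (m := t + 1 + 1) (by omega) (by omega)]
    funext β
    simp only [Pi.add_apply, Pi.neg_apply, Pi.smul_apply, smul_eq_mul]
    field_simp
    ring
  · simp only [e, map_add, map_neg, map_smul, Phi_w_of_ne ht1 htn (m := j) (by omega) (by omega),
      Phi_w_of_ne ht1 htn (m := j + 1) (by omega) (by omega)]
    funext β
    simp only [Pi.add_apply, Pi.neg_apply, Pi.smul_apply, smul_eq_mul]
    field_simp

theorem stmt6 (n t j : ℕ) (hn : 2 ≤ n) (ht1 : 1 ≤ t) (ht2 : t ≤ n - 1)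
    (hj1 : 1 ≤ j) (hj2 : j ≤ n - 1) :
    (j + 1 = t → Phi n t (e n j) = q • e n j + e n (j + 1)) ∧
    (j = t → Phi n t (e n j) = -q⁻¹ • e n j) ∧
    (j = t + 1 → Phi n t (e n j) = e n (j - 1) + q • e n j) ∧
    ((j + 2 ≤ t ∨ t + 2 ≤ j) → Phi n t (e n j) = q • e n j) :=
  stmt6_general n t j ht1 ht2

end
end

section
/- Let n ≥ 2. The n-th power of the matrix A satisfies A^n = q^{n(n−3)} · 1, where 1 is the (n−1)×(n−1) identity matrix over K = ℂ(q). -/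
open scoped BigOperators

set_option maxHeartbeats 1000000
set_option synthInstance.maxHeartbeats 400000

noncomputable section

/-- The matrix of the action of `λ` on `H_1` in the basis `(e_j)`. -/
def Amat (n : ℕ) : Matrix (Fin (n - 1)) (Fin (n - 1)) K :=
  fun j i => if (i : ℕ) = 0 then -q ^ ((n : ℤ) - 3 - ((j : ℕ) : ℤ))
    else if (j : ℕ) + 1 = (i : ℕ) then q ^ (n - 2) else 0

/-!
Conjugating by `diag(q^{-j})` turns `A` into `q^{n-3} C`, where `C` is the companion matrix of
`1 + X + ⋯ + X^{n-1}`: `C e_i = e_{i-1}` for `i ≥ 1` and `C e_0 = -∑ e_j`. The last basis vector is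
cyclic for `C` and is killed by `G = ∑_{k<n} C^k`; as `G` commutes with `C`, it vanishes, so
`C^n - 1 = G (C - 1) = 0`. Hence `A^n = q^{n(n-3)}`.
-/

namespace Matrix

variable {R ι : Type*}

section GeomCompanion

variable (R) [Ring R]

def geomCompanion (m : ℕ) : Matrix (Fin m) (Fin m) R :=
  fun j i => if (i : ℕ) = 0 then -1 else if (j : ℕ) + 1 = i then 1 else 0

variable {R}

lemma geomCompanion_mulVec_single_zero (m : ℕ) :
    geomCompanion R (m + 1) *ᵥ Pi.single 0 1 = -1 := by
  ext j
  simp [geomCompanion]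

lemma geomCompanion_mulVec_single_succ {m : ℕ} (i : Fin m) :
    geomCompanion R (m + 1) *ᵥ Pi.single i.succ 1 = Pi.single i.castSucc 1 := by
  ext j
  simp [geomCompanion, Pi.single_apply, Fin.ext_iff]

lemma geomCompanion_pow_mulVec_single_last {m : ℕ} (k : Fin (m + 1)) :
    geomCompanion R (m + 1) ^ (k : ℕ) *ᵥ Pi.single (Fin.last m) 1 = Pi.single k.rev 1 := by
  induction k using Fin.induction with
  | zero => rw [Fin.val_zero, pow_zero, one_mulVec, Fin.rev_zero]
  | succ k ih =>
    rw [Fin.val_castSucc] at ih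
    rw [Fin.val_succ, pow_succ', ← mulVec_mulVec, ih, Fin.rev_castSucc,
      geomCompanion_mulVec_single_succ, Fin.rev_succ]

lemma geom_sum_geomCompanion_mulVec_single_last (m : ℕ) :
    (∑ k ∈ Finset.range (m + 2), geomCompanion R (m + 1) ^ k) *ᵥ Pi.single (Fin.last m) 1
      = 0 := by
  have h_last := geomCompanion_pow_mulVec_single_last (R := R) (Fin.last m)
  rw [Fin.val_last, Fin.rev_last] at h_last
  rw [sum_mulVec, Finset.sum_range_succ, Finset.sum_range, pow_succ', ← mulVec_mulVec, h_last,
    geomCompanion_mulVec_single_zero]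
  simp_rw [geomCompanion_pow_mulVec_single_last]
  have h_rev : ∑ k : Fin (m + 1), (Pi.single k.rev 1 : Fin (m + 1) → R) = ∑ i, Pi.single i 1 :=
    Equiv.sum_comp Fin.revPerm fun i => Pi.single i (1 : R)
  rw [h_rev, Finset.univ_sum_single, Pi.one_def, add_neg_cancel]

lemma geom_sum_geomCompanion (m : ℕ) :
    ∑ k ∈ Finset.range (m + 2), geomCompanion R (m + 1) ^ k = 0 := by
  refine ext_of_mulVec_single fun i => ?_
  have h_comm : Commute (∑ k ∈ Finset.range (m + 2), geomCompanion R (m + 1) ^ k)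
      (geomCompanion R (m + 1) ^ (i.rev : ℕ)) :=
    Commute.sum_left _ _ _ fun k _ => Commute.pow_pow_self _ k _
  rw [zero_mulVec, ← Fin.rev_rev i, ← geomCompanion_pow_mulVec_single_last, mulVec_mulVec,
    h_comm.eq, ← mulVec_mulVec, geom_sum_geomCompanion_mulVec_single_last, mulVec_zero]

lemma geomCompanion_pow_succ (m : ℕ) : geomCompanion R m ^ (m + 1) = 1 := by
  rcases m with _ | m
  · exact Subsingleton.elim _ _
  · rw [← sub_eq_zero, ← geom_sum_mul, geom_sum_geomCompanion, zero_mul]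

end GeomCompanion

lemma diagonal_mul_mul_diagonal_pow [Fintype ι] [DecidableEq ι] [CommSemiring R] {d e : ι → R}
    (hde : ∀ i, d i * e i = 1) (M : Matrix ι ι R) (k : ℕ) :
    (diagonal d * M * diagonal e) ^ k = diagonal d * M ^ k * diagonal e :=
  let u : (Matrix ι ι R)ˣ :=
    ⟨diagonal d, diagonal e, by rw [diagonal_mul_diagonal, funext hde, diagonal_one],
      by simp_rw [diagonal_mul_diagonal, mul_comm (e _), hde, diagonal_one]⟩
  u.conj_pow M k

end Matrix

open Matrix

lemma q_ne_zero : q ≠ 0 := RatFunc.X_ne_zero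

lemma Amat_eq_smul_diagonal_conj (n : ℕ) :
    Amat n = q ^ ((n : ℤ) - 3) • (diagonal (fun j : Fin (n - 1) => q ^ (-(j : ℤ))) *
      geomCompanion K (n - 1) * diagonal (fun i : Fin (n - 1) => q ^ (i : ℤ))) := by
  ext j i
  simp only [Amat, geomCompanion, Matrix.smul_apply, mul_diagonal, diagonal_mul, smul_eq_mul]
  split_ifs with h_zero h_succ
  · rw [h_zero, Nat.cast_zero, zpow_zero, mul_one, mul_neg_one, mul_neg, ← zpow_add₀ q_ne_zero,
      ← sub_eq_add_neg]
  · have : (i : ℕ) < n - 1 := i.isLt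
    rw [mul_one, ← zpow_natCast, ← zpow_add₀ q_ne_zero, ← zpow_add₀ q_ne_zero]
    congr 1
    omega
  · simp

theorem stmt9 (n : ℕ) (hn : 2 ≤ n) :
    Amat n ^ n = (q ^ ((n : ℤ) * ((n : ℤ) - 3))) •
      (1 : Matrix (Fin (n - 1)) (Fin (n - 1)) K) := by
  have h_pow : geomCompanion K (n - 1) ^ n = 1 := by
    have h := geomCompanion_pow_succ (R := K) (n - 1)
    rwa [Nat.sub_add_cancel (by omega)] at h
  have h_inv (j : Fin (n - 1)) : q ^ (-(j : ℤ)) * q ^ (j : ℤ) = 1 := by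
    rw [← zpow_add₀ q_ne_zero, neg_add_cancel, zpow_zero]
  rw [Amat_eq_smul_diagonal_conj, smul_pow, diagonal_mul_mul_diagonal_pow h_inv, h_pow, mul_one,
    diagonal_mul_diagonal, funext h_inv, diagonal_one, ← zpow_natCast, ← _root_.zpow_mul, mul_comm]

end
end

section
/- Let n ≥ 2. For 0 ≤ k ≤ n−1 let W_k be the submodule of T_n generated by H_k together with the image F_n(H_k). Then the family (W_k)_{k=0}^{n−1} forms an internal direct sum decomposition of T_n: the submodules W_k are independent and their sum is all of T_n. -/
open scoped BigOperators

set_option maxHeartbeats 1000000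
set_option synthInstance.maxHeartbeats 400000

noncomputable section

/-!
Write `E = ∑ᵢ q^{-(n-1-i)} eᵢ` and `F = ∑ᵢ q^i fᵢ`, where `eᵢ`, `fᵢ` act on the `i`-th tensor
factor with a Jordan–Wigner sign. These satisfy the canonical anticommutation relations
`eᵢeⱼ + eⱼeᵢ = 0` and `eᵢfⱼ + fⱼeᵢ = δᵢⱼ`, hence `E² = 0` and `EF + FE = [n]_q ≠ 0`.
So every `x = [n]_q⁻¹ (EFx + FEx)` with `EFx, Ex ∈ ker E`, and sorting by weight gives
`T_n = ∑ W_k`. If `∑ₖ (hₖ + F gₖ) = 0` with `hₖ, gₖ ∈ H_k`, applying `E` gives `[n]_q ∑ₖ gₖ = 0`;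
the `H_k` lie in distinct weight spaces, so all `gₖ` and then all `hₖ` vanish.
-/

open Finset Function

theorem sum_smul_mul_sum_smul_add {R A ι : Type*} [CommSemiring R] [NonUnitalNonAssocSemiring A]
    [Module R A] [IsScalarTower R A A] [SMulCommClass R A A] (s : Finset ι) (a b : ι → R)
    (x y : ι → A) :
    (∑ i ∈ s, a i • x i) * (∑ j ∈ s, b j • y j) + (∑ j ∈ s, b j • y j) * (∑ i ∈ s, a i • x i)
      = ∑ i ∈ s, ∑ j ∈ s, (a i * b j) • (x i * y j + y j * x i) := by
  rw [sum_mul_sum, sum_mul_sum,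
    sum_comm (s := s) (t := s) (f := fun j i => b j • y j * (a i • x i))]
  simp only [← sum_add_distrib, smul_mul_smul_comm, smul_add, mul_comm (b _)]

section Anticommuting

variable {R V : Type*} [Field R] [AddCommGroup V] [Module R V] {E F : Module.End R V} {c : R}

theorem eq_inv_smul_add_of_anticomm (hEF : E * F + F * E = c • 1) (hc : c ≠ 0) (x : V) :
    x = c⁻¹ • E (F x) + c⁻¹ • F (E x) := by
  have := LinearMap.congr_fun hEF x
  simp only [LinearMap.add_apply, Module.End.mul_apply, LinearMap.smul_apply,
    Module.End.one_apply] at this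
  rw [← smul_add, this, inv_smul_smul₀ hc]

theorem iSupIndep_sup_map_of_anticomm {ι : Type*} (hEF : E * F + F * E = c • 1) (hc : c ≠ 0)
    {H : ι → Submodule R V} (hH : iSupIndep H) (hHE : ∀ i, H i ≤ LinearMap.ker E) :
    iSupIndep fun i => H i ⊔ (H i).map F := by
  rw [iSupIndep_iff_finsetSum_eq_zero_imp_eq_zero] at hH ⊢
  intro s w hw hsum
  have hsplit : ∀ i ∈ s, ∃ h ∈ H i, ∃ g ∈ H i, h + F g = w i := fun i hi => by
    obtain ⟨h, hh, _, ⟨g, hg, rfl⟩, hhg⟩ := Submodule.mem_sup.mp (hw i hi)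
    exact ⟨h, hh, g, hg, hhg⟩
  choose! h hh g hg hw using hsplit
  have hEF_g : ∀ i ∈ s, E (h i + F (g i)) = c • g i := fun i hi => by
    have := LinearMap.congr_fun hEF (g i)
    simp only [LinearMap.add_apply, Module.End.mul_apply, LinearMap.smul_apply,
      Module.End.one_apply, LinearMap.mem_ker.mp (hHE i (hg i hi)), map_zero, add_zero] at this
    rw [map_add, LinearMap.mem_ker.mp (hHE i (hh i hi)), zero_add, this]
  have hg0 : ∀ i ∈ s, g i = 0 := hH s g hg <| by
    have := congrArg E hsum
    rw [map_zero, map_sum, sum_congr rfl fun i hi => (hw i hi ▸ hEF_g i hi), ← smul_sum] at this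
    exact (smul_eq_zero.mp this).resolve_left hc
  have hh0 : ∀ i ∈ s, h i = 0 := hH s h hh <| by
    rw [← hsum]
    exact sum_congr rfl fun i hi => by rw [← hw i hi, hg0 i hi, map_zero, add_zero]
  intro i hi
  rw [← hw i hi, hh0 i hi, hg0 i hi, map_zero, add_zero]

end Anticommuting

theorem card_filter_update_add {ι α : Type*} [Fintype ι] [DecidableEq ι] (β : ι → α) (j : ι)
    (x : α) (p : ι → α → Prop) [∀ a b, Decidable (p a b)] :
    #{a | p a (update β j x a)} + (if p j (β j) then 1 else 0)
      = #{a | p a (β a)} + (if p j x then 1 else 0) := by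
  rw [card_filter, card_filter, ← sum_erase_add _ _ (mem_univ j),
    ← sum_erase_add _ _ (mem_univ j), update_self,
    sum_congr rfl fun a ha => by rw [update_of_ne (ne_of_mem_erase ha)]]
  omega

section TensorPower

variable {n : ℕ}

def koszulSign (β : Fin n → Fin 2) (i : Fin n) : K := (-1) ^ #{j | j < i ∧ β j = 1}

theorem koszulSign_update (β : Fin n → Fin 2) (i j : Fin n) {x : Fin 2} (hx : β i ≠ x) :
    koszulSign (update β i x) j = (if i < j then -1 else 1) * koszulSign β j := by
  have h := card_filter_update_add β i x (fun a b => a < j ∧ b = 1)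
  unfold koszulSign
  by_cases hij : i < j <;> rcases Fin.exists_fin_two.mp ⟨β i, rfl⟩ with hb | hb <;>
    rcases Fin.exists_fin_two.mp ⟨x, rfl⟩ with hx' | hx' <;> simp_all
  all_goals first | rw [pow_succ]; ring | rw [← h, pow_succ]; ring

theorem koszulSign_update_self (β : Fin n → Fin 2) (i : Fin n) (x : Fin 2) :
    koszulSign (update β i x) i = koszulSign β i := by
  unfold koszulSign
  congr 2
  exact filter_congr fun j _ => by
    constructor <;> rintro ⟨hj, h⟩ <;> simp_all [update_of_ne hj.ne]

theorem koszulSign_mul_self (β : Fin n → Fin 2) (i : Fin n) :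
    koszulSign β i * koszulSign β i = 1 := by
  rw [koszulSign, ← pow_add, ← two_mul, pow_mul, neg_one_sq, one_pow]

theorem wt_update_one (β : Fin n → Fin 2) (i : Fin n) (h : β i = 0) :
    wt (update β i 1) = wt β + 1 := by
  simpa [wt, h] using card_filter_update_add β i 1 (fun _ b => b = 1)

theorem wt_update_zero (β : Fin n → Fin 2) (i : Fin n) (h : β i = 1) :
    wt (update β i 0) + 1 = wt β := by
  simpa [wt, h] using card_filter_update_add β i 0 (fun _ b => b = 1)

def lowerAt (n : ℕ) (i : Fin n) : Module.End K (T n) :=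
  LinearMap.mulLeft K (fun β => if β i = 0 then koszulSign β i else 0) ∘ₗ
    LinearMap.funLeft K K (fun β => update β i 1)

def raiseAt (n : ℕ) (i : Fin n) : Module.End K (T n) :=
  LinearMap.mulLeft K (fun β => if β i = 1 then koszulSign β i else 0) ∘ₗ
    LinearMap.funLeft K K (fun β => update β i 0)

theorem lowerAt_apply (i : Fin n) (f : T n) (β : Fin n → Fin 2) :
    lowerAt n i f β = if β i = 0 then koszulSign β i * f (update β i 1) else 0 := by
  simp [lowerAt, LinearMap.funLeft_apply, ite_mul]

theorem raiseAt_apply (i : Fin n) (f : T n) (β : Fin n → Fin 2) :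
    raiseAt n i f β = if β i = 1 then koszulSign β i * f (update β i 0) else 0 := by
  simp [raiseAt, LinearMap.funLeft_apply, ite_mul]

theorem En_eq_sum : En n = ∑ i : Fin n, q⁻¹ ^ (n - 1 - (i : ℕ)) • lowerAt n i := by
  refine LinearMap.ext fun f => funext fun β => ?_
  simp only [En, LinearMap.coe_mk, AddHom.coe_mk, LinearMap.sum_apply, Finset.sum_apply,
    LinearMap.smul_apply, Pi.smul_apply, lowerAt_apply, koszulSign, smul_eq_mul]
  refine sum_congr rfl fun i _ => ?_
  split_ifs <;> ring

theorem Fn_eq_sum : Fn n = ∑ i : Fin n, q ^ (i : ℕ) • raiseAt n i := by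
  refine LinearMap.ext fun f => funext fun β => ?_
  simp only [Fn, LinearMap.coe_mk, AddHom.coe_mk, LinearMap.sum_apply, Finset.sum_apply,
    LinearMap.smul_apply, Pi.smul_apply, raiseAt_apply, koszulSign, smul_eq_mul]
  refine sum_congr rfl fun i _ => ?_
  split_ifs <;> ring

theorem lowerAt_anticomm (i j : Fin n) :
    lowerAt n i * lowerAt n j + lowerAt n j * lowerAt n i = 0 := by
  refine LinearMap.ext fun f => funext fun β => ?_
  simp only [LinearMap.add_apply, Module.End.mul_apply, Pi.add_apply, lowerAt_apply,
    LinearMap.zero_apply, Pi.zero_apply]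
  rcases eq_or_ne i j with rfl | hij
  · simp
  rw [update_of_ne hij.symm, update_of_ne hij, update_comm hij]
  by_cases hi : β i = 0 <;> by_cases hj : β j = 0 <;>
    simp only [hi, hj, if_true, if_false, mul_zero, add_zero]
  rw [koszulSign_update β i j (by simp [hi]), koszulSign_update β j i (by simp [hj])]
  rcases hij.lt_or_gt with h | h <;> simp [h, h.not_gt] <;> ring

theorem lowerAt_raiseAt_anticomm (i j : Fin n) :
    lowerAt n i * raiseAt n j + raiseAt n j * lowerAt n i = if i = j then 1 else 0 := by
  refine LinearMap.ext fun f => funext fun β => ?_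
  simp only [LinearMap.add_apply, Module.End.mul_apply, Pi.add_apply, lowerAt_apply,
    raiseAt_apply]
  rcases eq_or_ne i j with rfl | hij
  · simp only [update_self, update_idem, koszulSign_update_self]
    by_cases hi : β i = 0
    · have hβ : update β i 0 = β := by rw [← hi, update_eq_self]
      simp [hi, hβ, ← mul_assoc, koszulSign_mul_self]
    · have hi : β i = 1 := by omega
      have hβ : update β i 1 = β := by rw [← hi, update_eq_self]
      simp [hi, hβ, ← mul_assoc, koszulSign_mul_self]
  simp only [if_neg hij, LinearMap.zero_apply, Pi.zero_apply]
  rw [update_of_ne hij.symm, update_of_ne hij, update_comm hij]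
  by_cases hi : β i = 0 <;> by_cases hj : β j = 1 <;>
    simp only [hi, hj, if_true, if_false, mul_zero, add_zero]
  rw [koszulSign_update β i j (by simp [hi]), koszulSign_update β j i (by simp [hj])]
  rcases hij.lt_or_gt with h | h <;> simp [h, h.not_gt] <;> ring

theorem En_mul_self : En n * En n = 0 := by
  have h : (2 : K) • (En n * En n) = 0 := by
    rw [two_smul, En_eq_sum, sum_smul_mul_sum_smul_add]
    simp [lowerAt_anticomm]
  exact (smul_eq_zero.mp h).resolve_left two_ne_zero

/-- The quantum integer `[n]_q`. -/
def qInt (n : ℕ) : K := ∑ i : Fin n, q⁻¹ ^ (n - 1 - (i : ℕ)) * q ^ (i : ℕ)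

theorem En_mul_Fn_add_Fn_mul_En : En n * Fn n + Fn n * En n = qInt n • 1 := by
  rw [En_eq_sum, Fn_eq_sum, sum_smul_mul_sum_smul_add]
  simp [lowerAt_raiseAt_anticomm, qInt, Finset.sum_smul]

theorem qInt_mul_pow : qInt n * q ^ (n - 1) = ∑ i : Fin n, q ^ (2 * (i : ℕ)) := by
  rw [qInt, sum_mul]
  refine sum_congr rfl fun i _ => ?_
  set k := n - 1 - (i : ℕ)
  rw [show n - 1 = k + i by omega, two_mul, pow_add, pow_add, inv_pow]
  field_simp [show q ≠ 0 from RatFunc.X_ne_zero]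

theorem qInt_ne_zero (hn : n ≠ 0) : qInt n ≠ 0 := by
  have hsum : ∑ i : Fin n, q ^ (2 * (i : ℕ))
      = algebraMap (Polynomial ℂ) K (∑ i : Fin n, Polynomial.X ^ (2 * (i : ℕ))) := by
    simp [q, RatFunc.algebraMap_X]
  have hpoly : ∑ i : Fin n, (Polynomial.X : Polynomial ℂ) ^ (2 * (i : ℕ)) ≠ 0 := fun h => by
    simpa [Polynomial.eval_finsetSum, hn] using congrArg (Polynomial.eval 1) h
  intro h
  have := qInt_mul_pow (n := n)
  rw [h, zero_mul, hsum] at this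
  exact hpoly (RatFunc.algebraMap_injective ℂ (by simpa using this.symm))

theorem eq_sum_smul_v (f : T n) : f = ∑ α, f α • v n α := by
  ext β
  simp [v]

theorem v_mem_Tk (α : Fin n → Fin 2) : v n α ∈ Tk n (wt α) :=
  Submodule.subset_span ⟨α, rfl, rfl⟩

theorem mem_Tk_iff {k : ℕ} {f : T n} : f ∈ Tk n k ↔ ∀ β, wt β ≠ k → f β = 0 := by
  constructor
  · intro hf
    induction hf using Submodule.span_induction with
    | mem g hg =>
      obtain ⟨α, rfl, rfl⟩ := hg
      intro β hβ
      simp only [v, ite_eq_right_iff, one_ne_zero]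
      rintro rfl
      exact hβ rfl
    | zero => exact fun _ _ => rfl
    | add g g' _ _ hg hg' => exact fun β hβ => by simp [hg β hβ, hg' β hβ]
    | smul a g _ hg => exact fun β hβ => by simp [hg β hβ]
  · intro hf
    rw [eq_sum_smul_v f]
    refine Submodule.sum_mem _ fun α _ => ?_
    by_cases hα : wt α = k
    · exact Submodule.smul_mem _ _ (hα ▸ v_mem_Tk α)
    · simp [hf α hα]

theorem iSupIndep_Tk (n : ℕ) : iSupIndep (Tk n) := by
  rw [iSupIndep_iff_finsetSum_eq_zero_imp_eq_zero]
  intro s f hf hsum k hk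
  ext β
  by_cases hβ : wt β = k
  · have := congrFun hsum β
    rwa [Finset.sum_apply, sum_eq_single_of_mem k hk fun j hj hjk =>
      mem_Tk_iff.mp (hf j hj) β (hβ ▸ hjk.symm)] at this
  · exact mem_Tk_iff.mp (hf k hk) β hβ

theorem iSup_Tk (n : ℕ) : ⨆ k, Tk n k = ⊤ := by
  refine eq_top_iff.mpr fun f _ => ?_
  rw [eq_sum_smul_v f]
  exact Submodule.sum_mem _ fun α _ =>
    Submodule.smul_mem _ _ (Submodule.mem_iSup_of_mem (wt α) (v_mem_Tk α))

theorem Tk_eq_bot_of_lt {k : ℕ} (hk : n < k) : Tk n k = ⊥ := by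
  refine (Submodule.eq_bot_iff _).mpr fun f hf => funext fun β => mem_Tk_iff.mp hf β ?_
  have : wt β ≤ n := (card_filter_le _ _).trans_eq (card_fin n)
  omega

theorem lowerAt_mem_Tk (i : Fin n) {k : ℕ} {f : T n} (hf : f ∈ Tk n k) :
    lowerAt n i f ∈ Tk n (k - 1) := by
  refine mem_Tk_iff.mpr fun β hβ => ?_
  rw [lowerAt_apply]
  split_ifs with hi
  · rw [mem_Tk_iff.mp hf _ (by rw [wt_update_one β i hi]; omega), mul_zero]
  · rfl

theorem raiseAt_mem_Tk (i : Fin n) {k : ℕ} {f : T n} (hf : f ∈ Tk n k) :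
    raiseAt n i f ∈ Tk n (k + 1) := by
  refine mem_Tk_iff.mpr fun β hβ => ?_
  rw [raiseAt_apply]
  split_ifs with hi
  · rw [mem_Tk_iff.mp hf _ (by have := wt_update_zero β i hi; omega), mul_zero]
  · rfl

-- With truncated subtraction this is also right for `k = 0`, where in fact `En n f = 0`.
theorem En_mem_Tk {k : ℕ} {f : T n} (hf : f ∈ Tk n k) : En n f ∈ Tk n (k - 1) := by
  rw [En_eq_sum, LinearMap.sum_apply]
  exact Submodule.sum_mem _ fun i _ => Submodule.smul_mem _ _ (lowerAt_mem_Tk i hf)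

theorem Fn_mem_Tk {k : ℕ} {f : T n} (hf : f ∈ Tk n k) : Fn n f ∈ Tk n (k + 1) := by
  rw [Fn_eq_sum, LinearMap.sum_apply]
  exact Submodule.sum_mem _ fun i _ => Submodule.smul_mem _ _ (raiseAt_mem_Tk i hf)

def Wk (n k : ℕ) : Submodule K (T n) := Hk n k ⊔ (Hk n k).map (Fn n)

theorem Tk_le_iSup_Wk (hn : n ≠ 0) (j : ℕ) : Tk n j ≤ ⨆ k : Fin n, Wk n k := by
  intro x hx
  rcases lt_or_ge n j with hnj | hjn
  · rw [Tk_eq_bot_of_lt hnj, Submodule.mem_bot] at hx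
    rw [hx]
    exact Submodule.zero_mem _
  have hW : ∀ k (hk : k < n), Wk n k ≤ ⨆ k : Fin n, Wk n k :=
    fun k hk => le_iSup (fun k : Fin n => Wk n k) ⟨k, hk⟩
  have hEE : ∀ y, En n (En n y) = 0 := fun y => LinearMap.congr_fun En_mul_self y
  have hEx : En n x ∈ Hk n (j - 1) := ⟨hEE x, En_mem_Tk hx⟩
  have hEFx : En n (Fn n x) ∈ ⨆ k : Fin n, Wk n k := by
    rcases hjn.lt_or_eq with hj | rfl
    · exact hW j hj (Submodule.mem_sup_left ⟨hEE _, by simpa using En_mem_Tk (Fn_mem_Tk hx)⟩)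
    · have hFx := Fn_mem_Tk hx
      rw [Tk_eq_bot_of_lt (lt_add_one j), Submodule.mem_bot] at hFx
      rw [hFx, map_zero]
      exact Submodule.zero_mem _
  rw [eq_inv_smul_add_of_anticomm En_mul_Fn_add_Fn_mul_En (qInt_ne_zero hn) x]
  exact add_mem (Submodule.smul_mem _ _ hEFx) (Submodule.smul_mem _ _
    (hW (j - 1) (by omega) (Submodule.mem_sup_right (Submodule.mem_map_of_mem hEx))))

end TensorPower

theorem stmt12 (n : ℕ) (hn : 2 ≤ n) :
    DirectSum.IsInternal (fun k : Fin n =>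
      Hk n (k : ℕ) ⊔ Submodule.map (Fn n) (Hk n (k : ℕ))) := by
  refine DirectSum.isInternal_submodule_of_iSupIndep_of_iSup_eq_top ?_ ?_
  · exact (iSupIndep_sup_map_of_anticomm En_mul_Fn_add_Fn_mul_En (qInt_ne_zero (by omega))
      ((iSupIndep_Tk n).mono fun k => inf_le_right) fun k => inf_le_left).comp Fin.val_injective
  · rw [eq_top_iff, ← iSup_Tk n]
    exact iSup_le (Tk_le_iSup_Wk (by omega))

end
end

section
/- Let n ≥ 2, and let p ≥ 0 and b ≥ 2 be integers with p + b ≤ n. Then the iterated product of the b−1 consecutive vectors e_{p+1}, e_{p+2}, …, e_{p+b−1} satisfies Ψ(e_{p+1}, …, e_{p+b−1}) = Σ_{r=0}^{b−1} (−1)^r q^{−(b−1−r)} v_{α(p,b,r)}, where α(p,b,r) is the binary string of length n whose entries equal 1 exactly at the positions p+1, …, p+b other than position p+r+1. Equivalently, Ψ(e_{p+1}, …, e_{p+b−1}) is the concatenation v₀^{⊗p} ⊗ Θ_b ⊗ v₀^{⊗(n−p−b)}. -/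
open scoped BigOperators

set_option maxHeartbeats 1000000
set_option synthInstance.maxHeartbeats 400000

noncomputable section

/-! Multiply `v₀^{⊗p} ⊗ Θ_b ⊗ v₀^{⊗(n-p-b)}` on the right by
`e_{p+b} = -w_{p+b} + q⁻¹ w_{p+b+1}`. The `w_{p+b}` part annihilates every basis string that
already has a `1` in position `p+b`, i.e. all terms but the last, and the `w_{p+b+1}` part puts a
`1` behind all existing `1`s, which costs no sign. Together these are exactly the terms of the
same vector for `b+1`, with coefficients `(-1)^r q^{-(b-r)}`, which is the induction step; the base
case is `e_{p+1} = Θ_2` placed at positions `p+1, p+2`. -/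

open Finset

lemma fin_two_eq_zero_of_ne_one {x : Fin 2} (h : x ≠ 1) : x = 0 := by
  fin_cases x <;> simp_all

section Product

variable {n : ℕ}

lemma mul2_add_left (f₁ f₂ g : T n) : mul2 n (f₁ + f₂) g = mul2 n f₁ g + mul2 n f₂ g := by
  funext γ
  simp only [mul2, Pi.add_apply, ← sum_add_distrib]
  refine sum_congr rfl fun α _ => ?_
  split_ifs <;> ring

lemma mul2_smul_left (c : K) (f g : T n) : mul2 n (c • f) g = c • mul2 n f g := by
  funext γ
  simp only [mul2, Pi.smul_apply, smul_eq_mul, mul_sum]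
  refine sum_congr rfl fun α _ => ?_
  split_ifs <;> ring

lemma mul2_add_right (f g₁ g₂ : T n) : mul2 n f (g₁ + g₂) = mul2 n f g₁ + mul2 n f g₂ := by
  funext γ
  simp only [mul2, Pi.add_apply, ← sum_add_distrib]
  refine sum_congr rfl fun α _ => ?_
  split_ifs <;> ring

lemma mul2_smul_right (c : K) (f g : T n) : mul2 n f (c • g) = c • mul2 n f g := by
  funext γ
  simp only [mul2, Pi.smul_apply, smul_eq_mul, mul_sum]
  refine sum_congr rfl fun α _ => ?_
  split_ifs <;> ring

lemma mul2_neg_right (f g : T n) : mul2 n f (-g) = -mul2 n f g := by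
  simpa using mul2_smul_right (-1) f g

lemma mul2_sum_left {ι : Type*} (s : Finset ι) (f : ι → T n) (g : T n) :
    mul2 n (∑ i ∈ s, f i) g = ∑ i ∈ s, mul2 n (f i) g := by
  classical
  induction s using Finset.induction_on with
  | empty => simpa using mul2_smul_left 0 0 g
  | insert i s hi ih => rw [sum_insert hi, sum_insert hi, mul2_add_left, ih]

lemma mul2_v_v_of_overlap {α β : Fin n → Fin 2} (i : Fin n) (hα : α i = 1) (hβ : β i = 1) :
    mul2 n (v n α) (v n β) = 0 := by
  funext γ
  refine sum_eq_zero fun α' _ => ?_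
  by_cases hα' : α' = α
  · subst hα'
    have hγ : (fun j => if α' j = 1 then 0 else γ j) ≠ β := fun h => by
      simpa [hα, hβ] using congrFun h i
    simp [v, hγ]
  · simp [v, hα']

lemma mul2_v_v {α β : Fin n → Fin 2} (hdisj : ∀ i, α i = 1 → β i = 0) :
    mul2 n (v n α) (v n β)
      = (-1 : K) ^ (∑ p ∈ univ.filter (fun p : Fin n × Fin n => p.1 < p.2),
          ((β p.1 : Fin 2) : ℕ) * ((α p.2 : Fin 2) : ℕ)) •
        v n (fun i => if α i = 1 then 1 else β i) := by
  funext γ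
  rw [mul2, sum_eq_single α (fun α' _ h => by simp [v, h]) (by simp)]
  have key : ((∀ i, α i = 1 → γ i = 1) ∧ (fun i => if α i = 1 then 0 else γ i) = β)
      ↔ γ = fun i => if α i = 1 then 1 else β i := by
    constructor
    · rintro ⟨hsub, rfl⟩
      funext i
      by_cases hi : α i = 1 <;> simp [hi, hsub]
    · rintro rfl
      refine ⟨fun i hi => by simp [hi], funext fun i => ?_⟩
      by_cases hi : α i = 1 <;> simp [hi, hdisj]
  by_cases hγ : γ = fun i => if α i = 1 then 1 else β i
  · obtain ⟨hsub, hrest⟩ := key.2 hγ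
    have hβ : ∀ i, (if α i = 1 then 0 else γ i) = β i := congrFun hrest
    rw [if_pos hsub]
    simp [v, hβ, ← hγ]
  · have hnot := mt key.1 hγ
    by_cases hsub : ∀ i, α i = 1 → γ i = 1
    · simp_all [v]
    · simp [hsub, v, hγ]

lemma mul2_v_v_of_lt {α β : Fin n → Fin 2} (hlt : ∀ i j, α i = 1 → β j = 1 → i < j) :
    mul2 n (v n α) (v n β) = v n (fun i => if α i = 1 then 1 else β i) := by
  have hdisj : ∀ i, α i = 1 → β i = 0 := fun i hα =>
    fin_two_eq_zero_of_ne_one fun hβ => lt_irrefl i (hlt i i hα hβ)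
  have hsign : ∑ p ∈ univ.filter (fun p : Fin n × Fin n => p.1 < p.2),
      ((β p.1 : Fin 2) : ℕ) * ((α p.2 : Fin 2) : ℕ) = 0 := by
    refine sum_eq_zero fun p hp => ?_
    by_cases hβ : β p.1 = 1
    · have hα : α p.2 ≠ 1 := fun hα => lt_asymm (mem_filter.mp hp).2 (hlt _ _ hα hβ)
      simp [fin_two_eq_zero_of_ne_one hα]
    · simp [fin_two_eq_zero_of_ne_one hβ]
  rw [mul2_v_v hdisj, hsign, pow_zero, one_smul]

end Product

/-- The string `α(p, b, r)`, with `0`-indexed positions: ones exactly at `p, …, p + b - 1`,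
except at `p + r`. -/
def blockString (n p b r : ℕ) : Fin n → Fin 2 :=
  fun i => if p ≤ (i : ℕ) ∧ (i : ℕ) < p + b ∧ (i : ℕ) ≠ p + r then 1 else 0

def unitString (n t : ℕ) : Fin n → Fin 2 := fun i => if (i : ℕ) = t then 1 else 0

def thetaCoeff (b r : ℕ) : K := (-1) ^ r * q⁻¹ ^ (b - 1 - r)

/-- `v₀^{⊗p} ⊗ Θ_b ⊗ v₀^{⊗(n-p-b)}`, written in the standard basis of `T n`. -/
def thetaAt (n p b : ℕ) : T n := ∑ r : Fin b, thetaCoeff b r • v n (blockString n p b r)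

section Block

variable {n : ℕ}

lemma w_succ_eq (t : ℕ) : w n (t + 1) = v n (unitString n t) := by
  simp only [w, Nat.add_right_cancel_iff]
  rfl

lemma e_succ_eq (t : ℕ) :
    e n (t + 1) = -v n (unitString n t) + q⁻¹ • v n (unitString n (t + 1)) := by
  rw [e, w_succ_eq, w_succ_eq]

lemma mul2_v_unitString {α : Fin n → Fin 2} {t : ℕ} (hα : ∀ i : Fin n, t ≤ i → α i = 0) :
    mul2 n (v n α) (v n (unitString n t)) = v n (fun i => if α i = 1 then 1 else unitString n t i) :=
  mul2_v_v_of_lt fun i j hi hj => by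
    by_contra h
    simp only [unitString, ite_eq_left_iff, zero_ne_one, imp_false, not_not] at hj
    simp [hα i (by omega)] at hi

lemma blockString_add_unitString {p b r : ℕ} (hr : r < b) :
    (fun i => if blockString n p b r i = 1 then 1 else unitString n (p + b) i)
      = blockString n p (b + 1) r := by
  funext i
  simp only [blockString, unitString]
  split_ifs <;> first | rfl | omega

lemma blockString_last_add_unitString {p b : ℕ} :
    (fun i => if blockString n p (b + 1) b i = 1 then 1 else unitString n (p + b) i)
      = blockString n p (b + 2) (b + 1) := by
  funext i
  simp only [blockString, unitString]
  split_ifs <;> first | rfl | omega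

lemma thetaCoeff_succ {b r : ℕ} (hr : r < b) : thetaCoeff (b + 1) r = q⁻¹ * thetaCoeff b r := by
  rw [thetaCoeff, thetaCoeff, show b + 1 - 1 - r = b - 1 - r + 1 by omega, pow_succ]
  ring

lemma thetaCoeff_succ_self (b : ℕ) : thetaCoeff (b + 2) (b + 1) = -thetaCoeff (b + 1) b := by
  simp [thetaCoeff, pow_succ]

lemma mul2_thetaAt_unitString_next (p b : ℕ) :
    mul2 n (thetaAt n p b) (v n (unitString n (p + b)))
      = ∑ r : Fin b, thetaCoeff b r • v n (blockString n p (b + 1) r) := by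
  rw [thetaAt, mul2_sum_left]
  refine sum_congr rfl fun r _ => ?_
  rw [mul2_smul_left, mul2_v_unitString (α := blockString n p b r) fun i hi => if_neg (by omega),
    blockString_add_unitString r.isLt]

/-- Only the last term of `thetaAt` survives: every other string already has a `1` at `p + b`. -/
lemma mul2_thetaAt_unitString_last {p b : ℕ} (h : p + b < n) :
    mul2 n (thetaAt n p (b + 1)) (v n (unitString n (p + b)))
      = thetaCoeff (b + 1) b • v n (blockString n p (b + 2) (b + 1)) := by
  rw [thetaAt, mul2_sum_left, Fin.sum_univ_castSucc, sum_eq_zero, zero_add]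
  · rw [Fin.val_last, mul2_smul_left,
      mul2_v_unitString (α := blockString n p (b + 1) b) fun i hi => if_neg (by omega),
      blockString_last_add_unitString]
  · intro r _
    have hr : (r : ℕ) < b := r.isLt
    rw [mul2_smul_left, mul2_v_v_of_overlap ⟨p + b, h⟩ (if_pos (by simp; omega)) (if_pos rfl),
      smul_zero]

lemma mul2_thetaAt_e {p b : ℕ} (h : p + b < n) :
    mul2 n (thetaAt n p (b + 1)) (e n (p + b + 1)) = thetaAt n p (b + 2) := by
  rw [e_succ_eq, mul2_add_right, mul2_neg_right, mul2_smul_right, mul2_thetaAt_unitString_last h,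
    show p + b + 1 = p + (b + 1) by ring, mul2_thetaAt_unitString_next, thetaAt,
    Fin.sum_univ_castSucc (n := b + 1), Fin.val_last, thetaCoeff_succ_self, neg_smul,
    smul_sum, add_comm]
  congr 1
  refine sum_congr rfl fun r _ => ?_
  rw [smul_smul, ← thetaCoeff_succ r.isLt, Fin.val_castSucc]

end Block

lemma thetaAt_two (n p : ℕ) : thetaAt n p 2 = e n (p + 1) := by
  have h₀ : blockString n p 2 0 = unitString n (p + 1) := by
    funext i
    simp only [blockString, unitString]
    split_ifs <;> first | rfl | omega
  have h₁ : blockString n p 2 1 = unitString n p := by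
    funext i
    simp only [blockString, unitString]
    split_ifs <;> first | rfl | omega
  rw [thetaAt, Fin.sum_univ_two, e_succ_eq, Fin.val_zero, Fin.val_one, h₀, h₁, add_comm]
  simp [thetaCoeff]

lemma psi_e_eq_thetaAt {n p : ℕ} (k : ℕ) (h : p + k + 2 ≤ n) :
    Psi n (k + 1) (fun i => e n (p + 1 + (i : ℕ))) = thetaAt n p (k + 2) := by
  induction k with
  | zero => exact (thetaAt_two n p).symm
  | succ k ih =>
    calc Psi n (k + 2) (fun i => e n (p + 1 + (i : ℕ)))
        = mul2 n (Psi n (k + 1) fun i => e n (p + 1 + (i : ℕ))) (e n (p + (k + 1) + 1)) := by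
          rw [Psi, Fin.val_last, show p + 1 + (k + 1) = p + (k + 1) + 1 by ring]
          rfl
      _ = thetaAt n p (k + 3) := by rw [ih (by omega), mul2_thetaAt_e (by omega)]

section Concatenation

variable {a b : ℕ}

lemma conc_v_v (α : Fin a → Fin 2) (β : Fin b → Fin 2) :
    conc (v a α) (v b β) = v (a + b) (Fin.append α β) := by
  funext γ
  have key : ((fun i => γ (Fin.castAdd b i)) = α ∧ (fun i => γ (Fin.natAdd a i)) = β)
      ↔ γ = Fin.append α β := by
    constructor
    · rintro ⟨rfl, rfl⟩
      exact Fin.append_castAdd_natAdd.symm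
    · rintro rfl
      simp
  simp only [conc, v, ← key, ite_and]
  split_ifs <;> simp

lemma conc_sum_left {ι : Type*} (s : Finset ι) (f : ι → T a) (g : T b) :
    conc (∑ i ∈ s, f i) g = ∑ i ∈ s, conc (f i) g := by
  funext γ
  simp [conc, sum_mul]

lemma conc_sum_right {ι : Type*} (s : Finset ι) (f : T a) (g : ι → T b) :
    conc f (∑ i ∈ s, g i) = ∑ i ∈ s, conc f (g i) := by
  funext γ
  simp [conc, mul_sum]

lemma conc_smul_left (c : K) (f : T a) (g : T b) : conc (c • f) g = c • conc f g := by
  funext γ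
  simp [conc, mul_assoc]

lemma conc_smul_right (c : K) (f : T a) (g : T b) : conc f (c • g) = c • conc f g := by
  funext γ
  simp [conc, mul_left_comm]

lemma castT_v (h : a = b) (α : Fin a → Fin 2) : castT h (v a α) = v b (α ∘ Fin.cast h.symm) := by
  subst h
  rfl

lemma castT_sum {ι : Type*} (h : a = b) (s : Finset ι) (f : ι → T a) :
    castT h (∑ i ∈ s, f i) = ∑ i ∈ s, castT h (f i) := by
  funext γ
  simp [castT]

lemma castT_smul (h : a = b) (c : K) (f : T a) : castT h (c • f) = c • castT h f := rfl

end Concatenation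

lemma append_comp_cast_eq_blockString {n p b m : ℕ} (h : p + b + m = n) (r : Fin b) :
    Fin.append (Fin.append (fun _ : Fin p => (0 : Fin 2)) fun i : Fin b => if i = r then 0 else 1)
        (fun _ : Fin m => 0) ∘ Fin.cast h.symm
      = blockString n p b r := by
  have append_apply {c d : ℕ} (u : Fin c → Fin 2) (w : Fin d → Fin 2) (i : Fin (c + d)) :
      Fin.append u w i = if h : (i : ℕ) < c then u ⟨i, h⟩ else w ⟨i - c, by omega⟩ :=
    congrFun (Matrix.vecAppend_eq_ite rfl u w) i
  funext i
  simp only [Function.comp_apply, append_apply, blockString, Fin.val_cast, Fin.ext_iff]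
  split_ifs <;> first | rfl | omega

lemma castT_conc_Theta {n p b m : ℕ} (h : p + b + m = n) :
    castT h (conc (conc (v0 p) (Theta b)) (v0 m)) = thetaAt n p b := by
  simp only [Theta, v0, conc_sum_right, conc_smul_right, conc_sum_left, conc_smul_left, conc_v_v,
    castT_sum, castT_smul, castT_v]
  exact sum_congr rfl fun r _ => by rw [append_comp_cast_eq_blockString h]; rfl

theorem stmt13 (n p b : ℕ) (hb : 2 ≤ b) (hpb : p + b ≤ n) :
    Psi n (b - 1) (fun i => e n (p + 1 + (i : ℕ)))
      = ∑ r : Fin b, ((-1 : K) ^ (r : ℕ) * q⁻¹ ^ (b - 1 - (r : ℕ))) •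
          v n (fun i => if p ≤ (i : ℕ) ∧ (i : ℕ) < p + b ∧ (i : ℕ) ≠ p + (r : ℕ) then 1 else 0) ∧
    Psi n (b - 1) (fun i => e n (p + 1 + (i : ℕ)))
      = castT (by omega : p + b + (n - p - b) = n)
          (conc (conc (v0 p) (Theta b)) (v0 (n - p - b))) := by
  obtain ⟨k, rfl⟩ : ∃ k, b = k + 2 := ⟨b - 2, by omega⟩
  have hPsi : Psi n (k + 2 - 1) (fun i => e n (p + 1 + (i : ℕ))) = thetaAt n p (k + 2) :=
    psi_e_eq_thetaAt k hpb
  exact ⟨hPsi, hPsi.trans (castT_conc_Theta _).symm⟩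

end
end
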